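/- arXiv:2011.01133 — 6 statements merged into one kernel-verified Lean document; each statement's English description precedes it below -/
import Mathlib

section
/- Let M = Γ(H ⋉ G,(u,0)) and let h satisfy 0 ≤ h ≤ u. If (a_m) is a sequence of elements of M_h that is bounded above by some element a ∈ M_h, then the supremum of (a_m) exists in M and belongs to M_h. -/
open Function Set

/-- A partially ordered set is Dedekind σ-complete if every monotone increasing
sequence bounded above has a supremum. -/
def DedekindSigmaComplete (G : Type*) [Preorder G] : Prop :=
  ∀ f : ℕ → G, Monotone f → BddAbove (Set.range f) → ∃ g, IsLUB (Set.range f) g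

section Lexi

variable {H : Type*} [AddCommGroup H] [LinearOrder H] [IsOrderedAddMonoid H]
variable {G : Type*} [AddCommGroup G] [Lattice G] [CovariantClass G G (· + ·) (· ≤ ·)]

/-- `u` is a strong unit of `H`. -/
def IsStrongUnit (u : H) : Prop := ∀ h : H, ∃ n : ℕ, 0 < n ∧ h ≤ n • u

/-- The underlying set of the lexicographic MV-algebra `Γ(H ⋉ G, (u,0))`. -/
def MSet (u : H) : Set (H ×ₗ G) := Set.Icc (toLex ((0 : H), (0 : G))) (toLex (u, (0 : G)))

/-- `M_h`: the elements of `M` whose first coordinate is `h`. -/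
def MLevel (u h : H) : Set (H ×ₗ G) := {z ∈ MSet (G := G) u | (ofLex z).1 = h}

/-- A sequence of elements of `M` is summable if all its finite partial sums lie in `M`. -/
def SummableSeq (u : H) (a : ℕ → H ×ₗ G) : Prop := ∀ F : Finset ℕ, ∑ m ∈ F, a m ∈ MSet u

/-- `x` is an `n`-dimensional observable on `Γ(H ⋉ G, (u,0))`. -/
def IsObservable (u : H) (n : ℕ) (x : Set (Fin n → ℝ) → H ×ₗ G) : Prop :=
  (∀ A : Set (Fin n → ℝ), MeasurableSet A → x A ∈ MSet u) ∧
  x Set.univ = toLex (u, (0 : G)) ∧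
  ∀ A : ℕ → Set (Fin n → ℝ), (∀ m, MeasurableSet (A m)) → Pairwise (Disjoint on A) →
    (∀ F : Finset ℕ, ∑ m ∈ F, x (A m) ∈ MSet u) ∧
    IsLUB {y | ∃ F : Finset ℕ, y = ∑ m ∈ F, x (A m)} (x (⋃ m, A m))

/-- The spectral resolution `F_x` of an observable `x`. -/
def specRes {n : ℕ} (x : Set (Fin n → ℝ) → H ×ₗ G) : (Fin n → ℝ) → H ×ₗ G :=
  fun t => x {s | ∀ i, s i < t i}

/-- The increment `V(F,[a,b))`. -/
def boxSum {n : ℕ} (F : (Fin n → ℝ) → H ×ₗ G) (a b : Fin n → ℝ) : H ×ₗ G :=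
  ∑ S : Finset (Fin n), ((-1 : ℤ) ^ (n - S.card)) • F (fun i => if i ∈ S then b i else a i)

/-- `F` is an `n`-dimensional spectral resolution on `Γ(H ⋉ G, (u,0))`. -/
def IsSpectralResolution (u : H) (n : ℕ) (F : (Fin n → ℝ) → H ×ₗ G) : Prop :=
  Monotone F ∧
  IsLUB (Set.range F) (toLex (u, (0 : G))) ∧
  (∀ t : Fin n → ℝ, IsLUB {y | ∃ s : Fin n → ℝ, (∀ i, s i < t i) ∧ y = F s} (F t)) ∧
  (∀ (i : Fin n) (s : Fin n → ℝ),
      IsGLB {y | ∃ r : ℝ, y = F (Function.update s i r)} (toLex ((0 : H), (0 : G)))) ∧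
  (∀ a b : Fin n → ℝ, a ≤ b →
      toLex ((0 : H), (0 : G)) ≤ boxSum F a b ∧ boxSum F a b ≤ toLex (u, (0 : G)))

/-- `T_h = {s ∈ ℝⁿ : F s ∈ M_h}`. -/
def TSet (u : H) {n : ℕ} (F : (Fin n → ℝ) → H ×ₗ G) (h : H) : Set (Fin n → ℝ) :=
  {s | F s ∈ MLevel u h}

/-- The projection `π_j^h(s)`. -/
noncomputable def proj (u : H) {n : ℕ} (F : (Fin n → ℝ) → H ×ₗ G) (h : H)
    (s : Fin n → ℝ) (j : Fin n) : ℝ :=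
  sInf {r : ℝ | Function.update s j r ∈ TSet u F h}

/-- The characteristic point `π_h(s)` associated to `s ∈ T_h`. -/
noncomputable def charPt (u : H) {n : ℕ} (F : (Fin n → ℝ) → H ×ₗ G) (h : H)
    (s : Fin n → ℝ) : Fin n → ℝ :=
  fun j => proj u F h s j

/-- The set of characteristic points of `T_h`. -/
def charPts (u : H) {n : ℕ} (F : (Fin n → ℝ) → H ×ₗ G) (h : H) : Set (Fin n → ℝ) :=
  charPt u F h '' TSet u F h

/-- The set of all characteristic points of `F`. -/
def charPoints (u : H) {n : ℕ} (F : (Fin n → ℝ) → H ×ₗ G) : Set (Fin n → ℝ) :=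
  {p | ∃ h : H, 0 < h ∧ h ≤ u ∧ p ∈ charPts u F h}

/-- A block of some `T_h`, `0 < h ≤ u`. -/
def IsBlock (u : H) {n : ℕ} (F : (Fin n → ℝ) → H ×ₗ G) (C : Set (Fin n → ℝ)) : Prop :=
  ∃ h : H, 0 < h ∧ h ≤ u ∧ ∃ s ∈ TSet u F h,
    C = {t ∈ TSet u F h | charPt u F h t = charPt u F h s}

/-- A `T_0`-adjoined block. -/
def IsT0AdjBlock (u : H) {n : ℕ} (F : (Fin n → ℝ) → H ×ₗ G) (C : Set (Fin n → ℝ)) : Prop :=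
  ∃ h : H, 0 < h ∧ h ≤ u ∧ (∃ s ∈ TSet u F h,
    C = {t ∈ TSet u F h | charPt u F h t = charPt u F h s}) ∧
    ∀ t ∈ C, ∀ j : Fin n, Function.update t j (proj u F h t j) ∈ TSet u F 0

end Lexi

/-
In the lexicographic order every element of `M_h` is compared with `(h, g)` through its second
coordinate alone, so the supremum of the `a_m` is `(h, g)` with `g` the supremum in `G` of their
second coordinates. That supremum exists because `G` is σ-complete: it is the supremum of the
monotone sequence of partial suprema, which is bounded by the second coordinate of the bound `a`.
Since `M` is an interval, `(h, g)`, squeezed between `a_0` and `a`, lies in `M`.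
-/

theorem DedekindSigmaComplete.exists_isLUB_range {α : Type*} [SemilatticeSup α]
    (hα : DedekindSigmaComplete α) (f : ℕ → α) (hf : BddAbove (range f)) :
    ∃ g, IsLUB (range f) g := by
  obtain ⟨g, hg⟩ := hα (partialSups f) (partialSups f).monotone
    (bddAbove_range_partialSups.mpr hf)
  exact ⟨g, by rwa [IsLUB, upperBounds_range_partialSups] at hg⟩

namespace Prod.Lex

variable {α β : Type*} [Preorder α] [Preorder β]

theorem snd_le_snd_of_le_of_fst_eq {x y : α ×ₗ β} (hxy : x ≤ y)
    (hfst : (ofLex x).1 = (ofLex y).1) : (ofLex x).2 ≤ (ofLex y).2 := by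
  rcases Prod.Lex.le_iff.mp hxy with hlt | ⟨_, hle⟩
  · exact absurd hlt (hfst ▸ lt_irrefl _)
  · exact hle

theorem isLUB_range_toLex_of_fst_eq {a : ℕ → α ×ₗ β} {c : α} (hfst : ∀ m, (ofLex (a m)).1 = c)
    {g : β} (hg : IsLUB (range fun m => (ofLex (a m)).2) g) :
    IsLUB (range a) (toLex (c, g)) := by
  refine ⟨?_, fun w hw => ?_⟩
  · rintro _ ⟨m, rfl⟩
    exact Prod.Lex.le_iff.mpr (.inr ⟨hfst m, hg.1 ⟨m, rfl⟩⟩)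
  rcases Prod.Lex.le_iff.mp (hw ⟨0, rfl⟩) with hlt | ⟨heq, -⟩
  · exact Prod.Lex.le_iff.mpr (.inl (hfst 0 ▸ hlt))
  · refine Prod.Lex.le_iff.mpr (.inr ⟨hfst 0 ▸ heq, hg.2 ?_⟩)
    rintro _ ⟨m, rfl⟩
    exact snd_le_snd_of_le_of_fst_eq (hw ⟨m, rfl⟩) ((hfst m).trans ((hfst 0).symm.trans heq))

end Prod.Lex

theorem stmt_1_general {H G : Type*} [AddCommGroup H] [LinearOrder H] [IsOrderedAddMonoid H]
    [AddCommGroup G] [Lattice G] [CovariantClass G G (· + ·) (· ≤ ·)]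
    (hG : DedekindSigmaComplete G) (u : H)
    (h : H)
    (a : ℕ → H ×ₗ G) (haM : ∀ m, a m ∈ MLevel u h)
    (b : H ×ₗ G) (hb : b ∈ MLevel u h) (hub : ∀ m, a m ≤ b) :
    ∃ z ∈ MLevel u h, IsLUB (Set.range a) z := by
  have hfst : ∀ m, (ofLex (a m)).1 = h := fun m => (haM m).2
  have hbdd : BddAbove (range fun m => (ofLex (a m)).2) := ⟨(ofLex b).2, by
    rintro _ ⟨m, rfl⟩
    exact Prod.Lex.snd_le_snd_of_le_of_fst_eq (hub m) ((hfst m).trans hb.2.symm)⟩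
  obtain ⟨g, hg⟩ := hG.exists_isLUB_range _ hbdd
  have hz := Prod.Lex.isLUB_range_toLex_of_fst_eq hfst hg
  have hzM : toLex (h, g) ∈ MSet u :=
    ordConnected_Icc.out (haM 0).1 hb.1 ⟨hz.1 ⟨0, rfl⟩, hz.2 (by rintro _ ⟨m, rfl⟩; exact hub m)⟩
  exact ⟨toLex (h, g), ⟨hzM, rfl⟩, hz⟩

theorem stmt_1 {H G : Type*} [AddCommGroup H] [LinearOrder H] [IsOrderedAddMonoid H]
    [AddCommGroup G] [Lattice G] [CovariantClass G G (· + ·) (· ≤ ·)]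
    (hG : DedekindSigmaComplete G) (u : H) (hu : IsStrongUnit u)
    (h : H) (h0 : 0 ≤ h) (hhu : h ≤ u)
    (a : ℕ → H ×ₗ G) (haM : ∀ m, a m ∈ MLevel u h)
    (b : H ×ₗ G) (hb : b ∈ MLevel u h) (hub : ∀ m, a m ≤ b) :
    ∃ z ∈ MLevel u h, IsLUB (Set.range a) z :=
  stmt_1_general hG u h a haM b hb hub
end

section
/- Let x be an n-dimensional observable on the lexicographic MV-algebra M = Γ(H ⋉ G,(u,0)). Then the map F_x : ℝⁿ → M, F_x(t_1,…,t_n) = x((−∞,t_1) × ⋯ × (−∞,t_n)), is an n-dimensional spectral resolution on M; that is, F_x is monotone for the coordinatewise order, the supremum of its range is the top element of M, F_x(t) is the supremum of {F_x(s) : s_i < t_i for all i} for every t ∈ ℝⁿ, for each index i and fixed remaining coordinates the infimum of {F_x(s_1,…,s_{i−1},t,s_{i+1},…,s_n) : t ∈ ℝ} is 0, and for all a ≤ b in ℝⁿ the increment V(F_x,[a,b)) := ∑_{S ⊆ {1,…,n}} (−1)^{n−|S|} F_x(c_S) (where the i-th coordinate of c_S is b_i if i ∈ S and a_i otherwise)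 satisfies 0 ≤ V(F_x,[a,b)) ≤ top element of M. -/
open Function Set

/-! An observable is a positive map into the ordered group `H ×ₗ G` which is σ-additive in the
sense that the value on a countable disjoint union is the supremum of the finite partial sums.
This already gives finite additivity, monotonicity and continuity from below and from above
along monotone sequences of measurable sets, which applied to the open lower orthants
`{s | s < t}` yield monotonicity, the limits at `±∞` and the left continuity of `F_x`.
By inclusion–exclusion (Möbius inversion over the subsets of coordinates) the increment
`V(F_x, [a, b))` equals `x [a, b)`, hence lies in `M`. -/

theorem Finset.sum_filter_superset_neg_one_pow_card_compl {ι : Type*} [Fintype ι]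
    [DecidableEq ι] (T : Finset ι) :
    ∑ S ∈ Finset.univ.filter (T ⊆ ·), (-1 : ℤ) ^ Sᶜ.card = if T = Finset.univ then 1 else 0 := by
  have hcompl : ∑ S ∈ Finset.univ.filter (T ⊆ ·), (-1 : ℤ) ^ Sᶜ.card
      = ∑ R ∈ Tᶜ.powerset, (-1 : ℤ) ^ R.card :=
    Finset.sum_nbij' (·ᶜ) (·ᶜ) (by simp) (by simp [Finset.subset_compl_comm]) (by simp)
      (by simp) (by simp)
  simp [hcompl, Finset.sum_powerset_neg_one_pow_card]

/-- Möbius inversion on the Boolean lattice of finite subsets of `ι`. -/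
theorem Finset.sum_neg_one_pow_card_compl_smul_sum_powerset {ι M : Type*} [Fintype ι]
    [DecidableEq ι] [AddCommGroup M] (f : Finset ι → M) :
    ∑ S : Finset ι, (-1 : ℤ) ^ Sᶜ.card • ∑ T ∈ S.powerset, f T = f Finset.univ := by
  calc ∑ S : Finset ι, (-1 : ℤ) ^ Sᶜ.card • ∑ T ∈ S.powerset, f T
      = ∑ T : Finset ι, ∑ S ∈ Finset.univ.filter (T ⊆ ·), (-1 : ℤ) ^ Sᶜ.card • f T := by
        simp only [Finset.smul_sum]
        exact Finset.sum_comm' (by simp)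
    _ = ∑ T : Finset ι, (if T = Finset.univ then (1 : ℤ) else 0) • f T := by
        simp only [← Finset.sum_smul, Finset.sum_filter_superset_neg_one_pow_card_compl]
    _ = f Finset.univ := by simp

section SigmaSupAdditive

variable {α M : Type*} [MeasurableSpace α] [AddCommGroup M] [PartialOrder M]
  [IsOrderedAddMonoid M]

/-- The measure-like part of the definition of an observable. -/
structure IsSigmaSupAdditive (x : Set α → M) : Prop where
  nonneg : ∀ ⦃A⦄, MeasurableSet A → 0 ≤ x A
  isLUB_iUnion : ∀ ⦃A : ℕ → Set α⦄, (∀ m, MeasurableSet (A m)) → Pairwise (Disjoint on A) →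
    IsLUB {y | ∃ F : Finset ℕ, y = ∑ m ∈ F, x (A m)} (x (⋃ m, A m))

namespace IsSigmaSupAdditive

variable {x : Set α → M} (hx : IsSigmaSupAdditive x)
include hx

theorem map_empty : x ∅ = 0 := by
  have h := hx.isLUB_iUnion (A := fun _ => ∅) (fun _ => .empty) fun _ _ _ => disjoint_bot_left
  rw [Set.iUnion_const] at h
  have hdouble : x ∅ + x ∅ ≤ x ∅ :=
    h.1 ⟨{0, 1}, (Finset.sum_pair (f := fun _ => x ∅) zero_ne_one).symm⟩
  exact le_antisymm (add_le_iff_nonpos_left.mp hdouble) (hx.nonneg .empty)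

theorem map_iUnion_eq_sum {B : ℕ → Set α} (hB : ∀ m, MeasurableSet (B m))
    (hdisj : Pairwise (Disjoint on B)) (F : Finset ℕ) (hF : ∀ m ∉ F, B m = ∅) :
    x (⋃ m, B m) = ∑ m ∈ F, x (B m) := by
  refine (hx.isLUB_iUnion hB hdisj).unique (IsGreatest.isLUB ⟨⟨F, rfl⟩, ?_⟩)
  rintro _ ⟨F', rfl⟩
  calc ∑ m ∈ F', x (B m) ≤ ∑ m ∈ F' ∪ F, x (B m) :=
        Finset.sum_le_sum_of_subset_of_nonneg Finset.subset_union_left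
          fun m _ _ => hx.nonneg (hB m)
    _ = ∑ m ∈ F, x (B m) :=
        (Finset.sum_subset Finset.subset_union_right fun m _ hm => by
          rw [hF m hm, hx.map_empty]).symm

theorem map_union {A B : Set α} (hA : MeasurableSet A) (hB : MeasurableSet B)
    (hAB : Disjoint A B) : x (A ∪ B) = x A + x B := by
  let C : ℕ → Set α := fun m => if m = 0 then A else if m = 1 then B else ∅
  have hC : ∀ m, MeasurableSet (C m) := fun m => by
    dsimp only [C]; split_ifs <;> first | exact hA | exact hB | exact .empty
  have hCdisj : Pairwise (Disjoint on C) := fun i j hij => by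
    rcases i with _ | _ | i <;> rcases j with _ | _ | j <;> simp_all [C, Function.onFun, hAB.symm]
  have hunion : ⋃ m, C m = A ∪ B := by
    ext w
    simp only [C, Set.mem_iUnion, Set.mem_union]
    constructor
    · rintro ⟨m, hm⟩
      split_ifs at hm <;> simp_all
    · rintro (hw | hw)
      exacts [⟨0, by simpa⟩, ⟨1, by simpa⟩]
  rw [← hunion, hx.map_iUnion_eq_sum hC hCdisj {0, 1} fun m hm => by simp_all [C]]
  simp [C]

theorem map_biUnion_finset {ι : Type*} [DecidableEq ι] {s : Finset ι} {f : ι → Set α}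
    (hf : ∀ i, MeasurableSet (f i)) (hdisj : (s : Set ι).PairwiseDisjoint f) :
    x (⋃ i ∈ s, f i) = ∑ i ∈ s, x (f i) := by
  induction s using Finset.induction_on with
  | empty => simpa using hx.map_empty
  | insert a s ha ih =>
    rw [Finset.coe_insert, Set.pairwiseDisjoint_insert_of_notMem (by simpa)] at hdisj
    rw [Finset.sum_insert ha, Finset.set_biUnion_insert,
      hx.map_union (hf a) (Finset.measurableSet_biUnion s fun i _ => hf i)
        (Set.disjoint_iUnion₂_right.2 hdisj.2), ih hdisj.1]

theorem map_diff {A B : Set α} (hA : MeasurableSet A) (hB : MeasurableSet B) (hAB : A ⊆ B) :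
    x (B \ A) = x B - x A := by
  rw [eq_sub_iff_add_eq, add_comm, ← hx.map_union hA (hB.diff hA) disjoint_sdiff_right,
    Set.union_sdiff_cancel hAB]

theorem map_mono {A B : Set α} (hA : MeasurableSet A) (hB : MeasurableSet B) (hAB : A ⊆ B) :
    x A ≤ x B :=
  sub_nonneg.mp (hx.map_diff hA hB hAB ▸ hx.nonneg (hB.diff hA))

theorem isLUB_of_monotone {A : ℕ → Set α} (hA : ∀ m, MeasurableSet (A m)) (hmono : Monotone A) :
    IsLUB (Set.range fun m => x (A m)) (x (⋃ m, A m)) := by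
  have hsum : ∀ k, x (A k) = ∑ m ∈ Finset.range (k + 1), x (disjointed A m) := fun k => by
    rw [← hx.map_biUnion_finset (MeasurableSet.disjointed hA)
      ((disjoint_disjointed A).set_pairwise _), biUnion_range_succ_disjointed,
      hmono.partialSups_eq]
  have h := hx.isLUB_iUnion (MeasurableSet.disjointed hA) (disjoint_disjointed A)
  rw [iUnion_disjointed] at h
  refine h.of_isCofinalFor (by rintro _ ⟨k, rfl⟩; exact ⟨_, hsum k⟩) ?_
  rintro _ ⟨F, rfl⟩
  obtain ⟨k, hk⟩ := F.exists_nat_subset_range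
  refine ⟨x (A k), ⟨k, rfl⟩, hsum k ▸ Finset.sum_le_sum_of_subset_of_nonneg
    (hk.trans (Finset.range_subset_range.2 k.le_succ)) fun m _ _ => hx.nonneg ?_⟩
  exact MeasurableSet.disjointed hA m

/-- Continuity from above, obtained from continuity from below applied to `A 0 \ A m`. -/
theorem isGLB_of_antitone {A : ℕ → Set α} (hA : ∀ m, MeasurableSet (A m)) (hanti : Antitone A)
    (hempty : ⋂ m, A m = ∅) : IsGLB (Set.range fun m => x (A m)) 0 := by
  have h := hx.isLUB_of_monotone (A := fun m => A 0 \ A m) (fun m => (hA 0).diff (hA m))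
    fun _ _ hmk => Set.sdiff_subset_sdiff_right (hanti hmk)
  rw [← Set.sdiff_iInter, hempty, Set.sdiff_empty] at h
  simp only [hx.map_diff (hA _) (hA 0) (hanti (Nat.zero_le _))] at h
  refine ⟨by rintro _ ⟨m, rfl⟩; exact hx.nonneg (hA m), fun b hb => ?_⟩
  have hle : x (A 0) ≤ x (A 0) - b :=
    h.2 (by rintro _ ⟨m, rfl⟩; exact sub_le_sub_left (hb ⟨m, rfl⟩) _)
  exact le_sub_self_iff _ |>.mp hle

end IsSigmaSupAdditive

end SigmaSupAdditive

section Boxes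

variable {ι : Type*}

theorem measurableSet_setOf_forall_lt [Countable ι] (t : ι → ℝ) :
    MeasurableSet {s : ι → ℝ | ∀ i, s i < t i} := by
  simp_rw [Set.ofPred_forall]
  exact .iInter fun i => measurableSet_lt (measurable_pi_apply i) measurable_const

/-- For `T ⊆ S` these cells partition the orthant below the vertex of `[a, b)` with coordinates
`b i` on `S` and `a i` off `S`; the cell of `T = univ` is `[a, b)` itself. -/
def boxCell [DecidableEq ι] (a b : ι → ℝ) (T : Finset ι) : Set (ι → ℝ) :=
  Set.univ.pi fun i => if i ∈ T then Set.Ico (a i) (b i) else Set.Iio (a i)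

variable [DecidableEq ι]

theorem measurableSet_boxCell [Countable ι] (a b : ι → ℝ) (T : Finset ι) :
    MeasurableSet (boxCell a b T) :=
  .univ_pi fun i => by
    split_ifs
    exacts [measurableSet_Ico, measurableSet_Iio]

theorem eq_filter_of_mem_boxCell [Fintype ι] {a b w : ι → ℝ} {T : Finset ι}
    (hw : w ∈ boxCell a b T) : T = Finset.univ.filter fun i => a i ≤ w i := by
  ext i
  have hwi := hw i (Set.mem_univ i)
  by_cases hi : i ∈ T <;> simp_all

theorem pairwise_disjoint_boxCell [Fintype ι] (a b : ι → ℝ) :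
    Pairwise (Disjoint on boxCell a b) := fun _ _ hne =>
  Set.disjoint_left.2 fun _ hw hw' =>
    hne ((eq_filter_of_mem_boxCell hw).trans (eq_filter_of_mem_boxCell hw').symm)

theorem setOf_forall_lt_ite_eq_biUnion_boxCell {a b : ι → ℝ} (hab : a ≤ b) (S : Finset ι) :
    {w : ι → ℝ | ∀ i, w i < if i ∈ S then b i else a i} = ⋃ T ∈ S.powerset, boxCell a b T := by
  ext w
  simp only [boxCell, Set.mem_ofPred_eq, Set.mem_iUnion, Finset.mem_powerset, Set.mem_pi,
    Set.mem_univ, true_implies, exists_prop]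
  constructor
  · intro hw
    refine ⟨S.filter fun i => a i ≤ w i, Finset.filter_subset _ _, fun i => ?_⟩
    have hwi := hw i
    rcases le_or_gt (a i) (w i) with hai | hai
    · by_cases hiS : i ∈ S <;> simp_all [not_le.2]
    · simp [not_le.2 hai, hai]
  · rintro ⟨T, hTS, hw⟩ i
    have hwi := hw i
    have hbi := hab i
    by_cases hiT : i ∈ T
    · simp_all [hTS hiT]
    · by_cases hiS : i ∈ S <;> simp_all
      linarith

end Boxes

section Limits

variable {ι : Type*} [Finite ι]

theorem iUnion_setOf_forall_lt_natCast : ⋃ m : ℕ, {w : ι → ℝ | ∀ i, w i < m} = Set.univ := by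
  refine Set.eq_univ_of_forall fun w => Set.mem_iUnion.2 ?_
  exact (Filter.eventually_all.2 fun i =>
    (tendsto_natCast_atTop_atTop (R := ℝ)).eventually_gt_atTop (w i)).exists

theorem iUnion_setOf_forall_lt_sub_one_div (t : ι → ℝ) :
    ⋃ m : ℕ, {w : ι → ℝ | ∀ i, w i < t i - 1 / ((m : ℝ) + 1)} = {w | ∀ i, w i < t i} := by
  refine Set.Subset.antisymm (Set.iUnion_subset fun m w hw i => (hw i).trans ?_) fun w hw => ?_
  · exact sub_lt_self _ Nat.one_div_pos_of_nat
  · refine Set.mem_iUnion.2 ((Filter.eventually_all (l := Filter.atTop)).2 fun i => ?_).exists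
    filter_upwards [tendsto_one_div_add_atTop_nhds_zero_nat.eventually_lt_const
      (sub_pos.2 (hw i))] with m hm
    linarith

end Limits

theorem iInter_setOf_forall_lt_update_neg {ι : Type*} [DecidableEq ι] (s : ι → ℝ) (i : ι) :
    ⋂ m : ℕ, {w : ι → ℝ | ∀ j, w j < Function.update s i (-(m : ℝ)) j} = ∅ := by
  refine Set.eq_empty_of_forall_notMem fun w hw => ?_
  obtain ⟨m, hm⟩ := exists_nat_gt (-(w i))
  have hwi := Set.mem_iInter.1 hw m i
  rw [Function.update_self] at hwi
  linarith

theorem IsOrderedAddMonoid.of_addLeftMono (G : Type*) [AddCommMonoid G] [Preorder G]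
    [AddLeftMono G] : IsOrderedAddMonoid G where
  add_le_add_left _ _ h c := add_le_add_left h c

section SpectralResolution

variable {H G : Type*} [AddCommGroup H] [LinearOrder H] [AddCommGroup G] [Lattice G]
  {u : H} {n : ℕ} {x : Set (Fin n → ℝ) → H ×ₗ G}

theorem IsObservable.isSigmaSupAdditive (hx : IsObservable u n x) : IsSigmaSupAdditive x :=
  ⟨fun A hA => (hx.1 A hA).1, fun _ hA hdisj => (hx.2.2 _ hA hdisj).2⟩

variable [IsOrderedAddMonoid H] [AddLeftMono G]

attribute [local instance] IsOrderedAddMonoid.of_addLeftMono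

namespace IsSigmaSupAdditive

variable (hx : IsSigmaSupAdditive x)
include hx

theorem monotone_specRes : Monotone (specRes x) := fun s t hst =>
  hx.map_mono (measurableSet_setOf_forall_lt s) (measurableSet_setOf_forall_lt t)
    fun _ hw i => (hw i).trans_le (hst i)

theorem isLUB_specRes (t : Fin n → ℝ) :
    IsLUB {y | ∃ s : Fin n → ℝ, (∀ i, s i < t i) ∧ y = specRes x s} (specRes x t) := by
  have h := hx.isLUB_of_monotone (A := fun m : ℕ => {w | ∀ i, w i < t i - 1 / ((m : ℝ) + 1)})
    (fun m => measurableSet_setOf_forall_lt _)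
    fun m k hmk w hw i => (hw i).trans_le (sub_le_sub_left (Nat.one_div_le_one_div hmk) _)
  rw [iUnion_setOf_forall_lt_sub_one_div] at h
  refine h.of_subset_of_superset isLUB_Iic ?_ ?_
  · rintro _ ⟨m, rfl⟩
    exact ⟨_, fun i => sub_lt_self _ Nat.one_div_pos_of_nat, rfl⟩
  · rintro _ ⟨s, hst, rfl⟩
    exact hx.monotone_specRes fun i => (hst i).le

theorem isGLB_specRes_update (i : Fin n) (s : Fin n → ℝ) :
    IsGLB {y | ∃ r : ℝ, y = specRes x (Function.update s i r)} 0 := by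
  have h := hx.isGLB_of_antitone
    (A := fun m : ℕ => {w | ∀ j, w j < Function.update s i (-(m : ℝ)) j})
    (fun m => measurableSet_setOf_forall_lt _) (fun m k hmk _ hw j => ?_)
    (iInter_setOf_forall_lt_update_neg s i)
  · refine h.of_subset_of_superset isGLB_Ici ?_ ?_
    · rintro _ ⟨m, rfl⟩
      exact ⟨_, rfl⟩
    · rintro _ ⟨r, rfl⟩
      exact hx.nonneg (measurableSet_setOf_forall_lt _)
  · refine (hw j).trans_le ?_
    rcases eq_or_ne j i with rfl | hji
    · simpa using hmk
    · simp [hji]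

theorem boxSum_specRes {a b : Fin n → ℝ} (hab : a ≤ b) :
    boxSum (specRes x) a b = x (boxCell a b Finset.univ) := by
  have hcell : ∀ S : Finset (Fin n), specRes x (fun i => if i ∈ S then b i else a i)
      = ∑ T ∈ S.powerset, x (boxCell a b T) := fun S => by
    rw [specRes, setOf_forall_lt_ite_eq_biUnion_boxCell hab S,
      hx.map_biUnion_finset (measurableSet_boxCell a b)
        ((pairwise_disjoint_boxCell a b).set_pairwise _)]
  have hsign : ∀ S : Finset (Fin n), n - S.card = Sᶜ.card := fun S => by
    rw [Finset.card_compl, Fintype.card_fin]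
  simp only [boxSum, hcell, hsign]
  exact Finset.sum_neg_one_pow_card_compl_smul_sum_powerset _

end IsSigmaSupAdditive

theorem IsObservable.isLUB_range_specRes (hx : IsObservable u n x) :
    IsLUB (Set.range (specRes x)) (toLex (u, (0 : G))) := by
  have h := hx.isSigmaSupAdditive.isLUB_of_monotone
    (A := fun m : ℕ => {w : Fin n → ℝ | ∀ i, w i < m}) (fun m => measurableSet_setOf_forall_lt _)
    fun m k hmk w hw i => (hw i).trans_le (Nat.cast_le.2 hmk)
  rw [iUnion_setOf_forall_lt_natCast, hx.2.1] at h
  refine h.of_subset_of_superset isLUB_Iic ?_ ?_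
  · rintro _ ⟨m, rfl⟩
    exact ⟨_, rfl⟩
  · rintro _ ⟨t, rfl⟩
    exact (hx.1 _ (measurableSet_setOf_forall_lt t)).2

end SpectralResolution

theorem stmt_3_general {H G : Type*} [AddCommGroup H] [LinearOrder H] [IsOrderedAddMonoid H]
    [AddCommGroup G] [Lattice G] [CovariantClass G G (· + ·) (· ≤ ·)]
    (u : H) (n : ℕ) (x : Set (Fin n → ℝ) → H ×ₗ G)
    (hx : IsObservable u n x) :
    IsSpectralResolution u n (specRes x) := by
  have hσ := hx.isSigmaSupAdditive
  refine ⟨hσ.monotone_specRes, hx.isLUB_range_specRes, hσ.isLUB_specRes,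
    hσ.isGLB_specRes_update, fun a b hab => ?_⟩
  rw [hσ.boxSum_specRes hab]
  exact hx.1 _ (measurableSet_boxCell a b Finset.univ)

theorem stmt_3 {H G : Type*} [AddCommGroup H] [LinearOrder H] [IsOrderedAddMonoid H]
    [AddCommGroup G] [Lattice G] [CovariantClass G G (· + ·) (· ≤ ·)]
    (hG : DedekindSigmaComplete G) (u : H) (hu : IsStrongUnit u)
    (n : ℕ) (hn : 1 ≤ n) (x : Set (Fin n → ℝ) → H ×ₗ G)
    (hx : IsObservable u n x) :
    IsSpectralResolution u n (specRes x) :=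
  stmt_3_general u n x hx
end

section
/- Let x be an n-dimensional observable on the lexicographic MV-algebra M = Γ(H ⋉ G,(u,0)) and let F_x be its spectral resolution. If (t^m) is a sequence in ℝⁿ increasing coordinatewise to t ∈ ℝⁿ with t^m_i < t_i for every coordinate i and every m, then the supremum of {F_x(t^m) : m ∈ ℕ} equals F_x(t). -/
open Function Set

/-
A lexicographic MV-algebra sits inside the ordered group `H ×ₗ G`, and an observable `x` is a
`σ`-additive map into it in the sense that `x (⋃ Aₘ)` is the supremum of the finite partial sums.
Such a map is finitely additive and nonnegative, hence continuous from below: for an increasing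
sequence `Bₘ`, `x Bₘ` is the partial sum of `x` over the disjointed pieces of `B`, so the
supremum of the `x Bₘ` is the supremum of all finite partial sums, i.e. `x (⋃ Bₘ)`. The boxes
`{s | s < tᵐ}` increase to `{s | s < t}` because `tᵐ → t` from strictly below.
-/

theorem isOrderedAddMonoid_of_addLeftMono {G : Type*} [AddCommMonoid G] [Preorder G]
    [AddLeftMono G] : IsOrderedAddMonoid G :=
  ⟨fun _ _ h c => add_le_add_left h c, fun _ _ h c => add_le_add_right h c⟩

section SupAdditive

variable {α M : Type*} [MeasurableSpace α] [AddCommMonoid M] [PartialOrder M]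

def IsSupAdditive (μ : Set α → M) : Prop :=
  ∀ A : ℕ → Set α, (∀ m, MeasurableSet (A m)) → Pairwise (Disjoint on A) →
    IsLUB {y | ∃ F : Finset ℕ, y = ∑ m ∈ F, μ (A m)} (μ (⋃ m, A m))

namespace IsSupAdditive

variable {μ : Set α → M} (hμ : IsSupAdditive μ)
include hμ

theorem isLUB_biUnion_finset (s : Finset ℕ) {A : ℕ → Set α}
    (hA : ∀ k ∈ s, MeasurableSet (A k)) (hd : (s : Set ℕ).PairwiseDisjoint A) :
    IsLUB {y | ∃ F : Finset ℕ, y = ∑ m ∈ F, μ (if m ∈ s then A m else ∅)}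
      (μ (⋃ k ∈ s, A k)) := by
  have hmeas : ∀ m, MeasurableSet (if m ∈ s then A m else ∅) := fun m => by
    split_ifs with hm
    exacts [hA m hm, .empty]
  have hdisj : Pairwise (Disjoint on fun m => if m ∈ s then A m else ∅) := fun i j hij => by
    simp only [onFun]
    split_ifs with hi hj <;> first | exact hd hi hj hij | simp
  simpa [iUnion_ite] using hμ _ hmeas hdisj

theorem nonneg {B : Set α} (hB : MeasurableSet B) : 0 ≤ μ B := by
  have hlub := hμ.isLUB_biUnion_finset {0} (A := fun _ => B) (by simpa using hB) (by simp)
  simpa using hlub.1 ⟨∅, rfl⟩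

variable [IsOrderedCancelAddMonoid M]

theorem map_empty : μ ∅ = 0 := by
  have hlub := hμ (fun _ => ∅) (fun _ => .empty) fun _ _ _ => disjoint_bot_left
  rw [iUnion_empty] at hlub
  have hdouble : μ ∅ + μ ∅ ≤ μ ∅ := by
    simpa only [Finset.sum_pair zero_ne_one] using hlub.1 ⟨{0, 1}, rfl⟩
  exact le_antisymm ((add_le_iff_nonpos_right _).1 hdouble) (hlub.1 ⟨∅, by simp⟩)

theorem map_biUnion_finset (s : Finset ℕ) {A : ℕ → Set α}
    (hA : ∀ k ∈ s, MeasurableSet (A k)) (hd : (s : Set ℕ).PairwiseDisjoint A) :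
    μ (⋃ k ∈ s, A k) = ∑ k ∈ s, μ (A k) := by
  have hterm : ∀ m, μ (if m ∈ s then A m else ∅) = if m ∈ s then μ (A m) else 0 := fun m => by
    split_ifs
    exacts [rfl, hμ.map_empty]
  refine (hμ.isLUB_biUnion_finset s hA hd).unique (IsGreatest.isLUB ⟨⟨s, ?_⟩, ?_⟩)
  · simp only [hterm, Finset.sum_ite_mem, Finset.inter_self]
  · rintro _ ⟨F, rfl⟩
    simp only [hterm, Finset.sum_ite_mem]
    exact Finset.sum_le_sum_of_subset_of_nonneg Finset.inter_subset_right
      fun k hk _ => hμ.nonneg (hA k hk)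

theorem map_eq_sum_disjointed {B : ℕ → Set α} (hB : ∀ m, MeasurableSet (B m))
    (hBmono : Monotone B) (m : ℕ) :
    μ (B m) = ∑ k ∈ Finset.range (m + 1), μ (disjointed B k) := by
  rw [← hμ.map_biUnion_finset _ (fun k _ => MeasurableSet.disjointed hB k)
    ((disjoint_disjointed B).set_pairwise _), biUnion_range_succ_disjointed,
    hBmono.partialSups_eq]

theorem isLUB_map_iUnion_of_monotone {B : ℕ → Set α} (hB : ∀ m, MeasurableSet (B m))
    (hBmono : Monotone B) : IsLUB (range fun m => μ (B m)) (μ (⋃ m, B m)) := by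
  have hlub := hμ _ (MeasurableSet.disjointed hB) (disjoint_disjointed B)
  rw [iUnion_disjointed] at hlub
  refine ⟨?_, fun c hc => hlub.2 ?_⟩
  · rintro _ ⟨m, rfl⟩
    exact hlub.1 ⟨_, hμ.map_eq_sum_disjointed hB hBmono m⟩
  · rintro _ ⟨F, rfl⟩
    obtain ⟨N, hFN⟩ := F.exists_nat_subset_range
    calc ∑ k ∈ F, μ (disjointed B k)
        ≤ ∑ k ∈ Finset.range (N + 1), μ (disjointed B k) :=
          Finset.sum_le_sum_of_subset_of_nonneg
            (hFN.trans (Finset.range_subset_range.2 N.le_succ))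
            fun k _ _ => hμ.nonneg (MeasurableSet.disjointed hB k)
      _ = μ (B N) := (hμ.map_eq_sum_disjointed hB hBmono N).symm
      _ ≤ c := hc ⟨N, rfl⟩

end IsSupAdditive

end SupAdditive

theorem iUnion_setOf_forall_lt {ι β : Type*} [Finite ι] [TopologicalSpace β] [LinearOrder β]
    [ClosedIicTopology β] {tm : ℕ → ι → β} {t : ι → β} (hlt : ∀ m i, tm m i < t i)
    (hlim : Filter.Tendsto tm Filter.atTop (nhds t)) :
    ⋃ m, {s : ι → β | ∀ i, s i < tm m i} = {s | ∀ i, s i < t i} := by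
  refine Subset.antisymm (iUnion_subset fun m s hs i => (hs i).trans (hlt m i)) fun s hs => ?_
  have hev : ∀ᶠ m in Filter.atTop, ∀ i, s i < tm m i := Filter.eventually_all.2 fun i =>
    (tendsto_pi_nhds.1 hlim i).eventually_const_lt (hs i)
  exact mem_iUnion.2 hev.exists

theorem stmt_5_general {H G : Type*} [AddCommGroup H] [LinearOrder H] [IsOrderedAddMonoid H]
    [AddCommGroup G] [Lattice G] [CovariantClass G G (· + ·) (· ≤ ·)]
    (u : H)
    (n : ℕ) (x : Set (Fin n → ℝ) → H ×ₗ G)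
    (hx : IsObservable u n x)
    (tm : ℕ → Fin n → ℝ) (t : Fin n → ℝ)
    (hmono : Monotone tm) (hlt : ∀ m, ∀ i, tm m i < t i)
    (hlim : Filter.Tendsto tm Filter.atTop (nhds t)) :
    IsLUB (Set.range fun m => specRes x (tm m)) (specRes x t) := by
  have : IsOrderedAddMonoid G := isOrderedAddMonoid_of_addLeftMono
  have hσ : IsSupAdditive x := fun A hA hd => (hx.2.2 A hA hd).2
  have hboxes : Monotone fun m => {s : Fin n → ℝ | ∀ i, s i < tm m i} :=
    fun _ _ hkm _ hs i => (hs i).trans_le (hmono hkm i)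
  simpa only [specRes, iUnion_setOf_forall_lt hlt hlim] using
    hσ.isLUB_map_iUnion_of_monotone (fun m => by measurability) hboxes

theorem stmt_5 {H G : Type*} [AddCommGroup H] [LinearOrder H] [IsOrderedAddMonoid H]
    [AddCommGroup G] [Lattice G] [CovariantClass G G (· + ·) (· ≤ ·)]
    (hG : DedekindSigmaComplete G) (u : H) (hu : IsStrongUnit u)
    (n : ℕ) (hn : 1 ≤ n) (x : Set (Fin n → ℝ) → H ×ₗ G)
    (hx : IsObservable u n x)
    (tm : ℕ → Fin n → ℝ) (t : Fin n → ℝ)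
    (hmono : Monotone tm) (hlt : ∀ m, ∀ i, tm m i < t i)
    (hlim : Filter.Tendsto tm Filter.atTop (nhds t)) :
    IsLUB (Set.range fun m => specRes x (tm m)) (specRes x t) :=
  stmt_5_general u n x hx tm t hmono hlt hlim
end

section
/- Let x be an n-dimensional observable on the lexicographic MV-algebra M = Γ(H ⋉ G,(u,0)) and let F_x be its spectral resolution. For every nonempty proper subset J of {1,…,n}, all reals a_j ≤ b_j (j ∈ J), and all fixed reals s_i (i ∉ J), the partial increment ∑_{S ⊆ J} (−1)^{|J|−|S|} F_x(d_S) is ≥ 0, where the j-th coordinate of d_S is b_j if j ∈ S, a_j if j ∈ J∖S, and s_j if j ∉ J. -/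
open Function Set

/-!
Put `c j = a j` for `j ∈ J` and `c j = s j` otherwise. For `S ⊆ J` the lower orthant below the
corner `d_S` is the disjoint union, over `T ⊆ S`, of the cells that are `[c j, b j)` in the
coordinates `j ∈ T` and `(-∞, c j)` in the others. Finite additivity of `x` writes `F_x(d_S)` as
the sum of `x` over these cells, and Möbius inversion on the subsets of `J` collapses the
alternating sum to `x` of the single cell indexed by `J`, a measurable set, hence to an element
`≥ 0` of `M`.
-/

open Finset

theorem Finset.sum_powerset_neg_one_pow_smul_sum_powerset {α M : Type*} [DecidableEq α]
    [AddCommGroup M] (J : Finset α) (f : Finset α → M) :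
    ∑ S ∈ J.powerset, (-1 : ℤ) ^ (J.card - S.card) • ∑ T ∈ S.powerset, f T = f J := by
  induction J using Finset.induction_on generalizing f with
  | empty => simp
  | insert j K hj ih =>
    have hfirst : ∑ S ∈ K.powerset, (-1 : ℤ) ^ (K.card + 1 - S.card) • ∑ T ∈ S.powerset, f T
        = -∑ S ∈ K.powerset, (-1 : ℤ) ^ (K.card - S.card) • ∑ T ∈ S.powerset, f T := by
      rw [← sum_neg_distrib]
      refine sum_congr rfl fun S hS => ?_
      rw [Nat.sub_add_comm (card_le_card (mem_powerset.1 hS)), pow_succ, mul_neg_one, neg_smul]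
    have hsecond : ∑ S ∈ K.powerset, (-1 : ℤ) ^ (K.card + 1 - (insert j S).card) •
          ∑ T ∈ (insert j S).powerset, f T
        = ∑ S ∈ K.powerset, (-1 : ℤ) ^ (K.card - S.card) • ∑ T ∈ S.powerset, f T
          + ∑ S ∈ K.powerset, (-1 : ℤ) ^ (K.card - S.card) •
              ∑ T ∈ S.powerset, f (insert j T) := by
      rw [← sum_add_distrib]
      refine sum_congr rfl fun S hS => ?_
      have hjS : j ∉ S := fun h => hj (mem_powerset.1 hS h)
      rw [card_insert_of_notMem hjS, Nat.add_sub_add_right, sum_powerset_insert hjS, smul_add]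
    rw [sum_powerset_insert hj, card_insert_of_notMem hj, hfirst, hsecond, neg_add_cancel_left,
      ih]

structure IsFinitelyAdditive {α M : Type*} [MeasurableSpace α] [AddCommMonoid M]
    (m : Set α → M) : Prop where
  map_empty : m ∅ = 0
  map_union {A B : Set α} : MeasurableSet A → MeasurableSet B → Disjoint A B →
    m (A ∪ B) = m A + m B

theorem IsFinitelyAdditive.map_biUnion {α ι M : Type*} [MeasurableSpace α] [AddCommMonoid M]
    {m : Set α → M} (hm : IsFinitelyAdditive m) {C : ι → Set α} (hC : ∀ i, MeasurableSet (C i))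
    (F : Finset ι) (hdisj : (F : Set ι).PairwiseDisjoint C) :
    m (⋃ i ∈ F, C i) = ∑ i ∈ F, m (C i) := by
  classical
  induction F using Finset.induction_on with
  | empty => simpa using hm.map_empty
  | insert i F hi ih =>
    rw [coe_insert, Set.pairwiseDisjoint_insert_of_notMem (mem_coe.not.2 hi)] at hdisj
    rw [set_biUnion_insert, sum_insert hi,
      hm.map_union (hC i) (F.measurableSet_biUnion fun j _ => hC j)
        (Set.disjoint_iUnion₂_right.2 fun j hj => hdisj.2 j hj),
      ih hdisj.1]

section OrthantCell

variable {ι : Type*} [DecidableEq ι]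

def orthantCell (a b : ι → ℝ) (T : Finset ι) : Set (ι → ℝ) :=
  Set.univ.pi fun i => if i ∈ T then Set.Ico (a i) (b i) else Set.Iio (a i)

theorem measurableSet_orthantCell [Countable ι] (a b : ι → ℝ) (T : Finset ι) :
    MeasurableSet (orthantCell a b T) :=
  MeasurableSet.univ_pi fun i => by
    split_ifs
    exacts [measurableSet_Ico, measurableSet_Iio]

theorem disjoint_orthantCell_of_mem_of_notMem (a b : ι → ℝ) {T T' : Finset ι} {j : ι}
    (hjT : j ∈ T) (hjT' : j ∉ T') : Disjoint (orthantCell a b T) (orthantCell a b T') := by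
  refine Set.disjoint_left.2 fun t ht ht' => ?_
  have h : t j ∈ Set.Ico (a j) (b j) := by simpa [hjT] using ht j (Set.mem_univ j)
  have h' : t j ∈ Set.Iio (a j) := by simpa [hjT'] using ht' j (Set.mem_univ j)
  exact (not_le_of_gt h') h.1

theorem pairwiseDisjoint_orthantCell (a b : ι → ℝ) :
    (Set.univ : Set (Finset ι)).PairwiseDisjoint (orthantCell a b) := by
  intro T _ T' _ hne
  by_cases hTT' : T ⊆ T'
  · obtain ⟨j, hjT', hjT⟩ := Finset.exists_of_ssubset (hTT'.ssubset_of_ne hne)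
    exact (disjoint_orthantCell_of_mem_of_notMem a b hjT' hjT).symm
  · obtain ⟨j, hjT, hjT'⟩ := Finset.not_subset.1 hTT'
    exact disjoint_orthantCell_of_mem_of_notMem a b hjT hjT'

theorem setOf_forall_lt_eq_biUnion_orthantCell {a b : ι → ℝ} {S : Finset ι}
    (hab : ∀ i ∈ S, a i ≤ b i) :
    {t : ι → ℝ | ∀ i, t i < if i ∈ S then b i else a i} = ⋃ T ∈ S.powerset, orthantCell a b T := by
  ext t
  simp only [Set.mem_ofPred_eq, Set.mem_iUnion, Finset.mem_powerset, exists_prop, orthantCell,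
    Set.mem_univ_pi]
  constructor
  · intro ht
    refine ⟨S.filter fun i => a i ≤ t i, filter_subset _ _, fun i => ?_⟩
    by_cases hai : a i ≤ t i
    · have hiS : i ∈ S := by
        by_contra hiS
        have hlt := ht i
        rw [if_neg hiS] at hlt
        exact not_le_of_gt hlt hai
      have hlt := ht i
      rw [if_pos hiS] at hlt
      simpa [hiS, hai] using hlt
    · simpa [hai] using not_le.1 hai
  · rintro ⟨T, hTS, ht⟩ i
    specialize ht i
    by_cases hiT : i ∈ T
    · simp only [hiT, hTS hiT, if_true, Set.mem_Ico] at ht ⊢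
      exact ht.2
    · simp only [hiT, if_false, Set.mem_Iio] at ht
      split_ifs with hiS
      exacts [ht.trans_le (hab i hiS), ht]

theorem IsFinitelyAdditive.sum_neg_one_pow_smul_orthant [Countable ι] {M : Type*}
    [AddCommGroup M] {m : Set (ι → ℝ) → M} (hm : IsFinitelyAdditive m) (J : Finset ι)
    {a b : ι → ℝ} (hab : ∀ i ∈ J, a i ≤ b i) :
    ∑ S ∈ J.powerset, (-1 : ℤ) ^ (J.card - S.card) •
        m {t | ∀ i, t i < if i ∈ S then b i else a i} = m (orthantCell a b J) := by
  refine Eq.trans ?_ (sum_powerset_neg_one_pow_smul_sum_powerset J fun T => m (orthantCell a b T))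
  refine sum_congr rfl fun S hS => ?_
  rw [setOf_forall_lt_eq_biUnion_orthantCell fun i hi => hab i (mem_powerset.1 hS hi),
    hm.map_biUnion (measurableSet_orthantCell a b) _
      ((pairwiseDisjoint_orthantCell a b).subset (Set.subset_univ _))]

end OrthantCell

instance isOrderedAddMonoid_of_covariantClass {G : Type*} [AddCommGroup G] [PartialOrder G]
    [CovariantClass G G (· + ·) (· ≤ ·)] : IsOrderedAddMonoid G where
  add_le_add_left _ _ h c := by
    rw [add_comm _ c, add_comm _ c]
    exact CovariantClass.elim c h

namespace IsObservable

variable {H : Type*} [AddCommGroup H] [LinearOrder H]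
variable {G : Type*} [AddCommGroup G] [Lattice G]
variable {u : H} {n : ℕ} {x : Set (Fin n → ℝ) → H ×ₗ G}

theorem nonneg (hx : IsObservable u n x) {A : Set (Fin n → ℝ)} (hA : MeasurableSet A) :
    0 ≤ x A :=
  (hx.1 A hA).1

variable [IsOrderedAddMonoid H] [CovariantClass G G (· + ·) (· ≤ ·)]

theorem map_empty (hx : IsObservable u n x) : x ∅ = 0 := by
  have hlub := (hx.2.2 (fun _ => ∅) (fun _ => .empty) fun _ _ _ => disjoint_bot_left).2
  rw [Set.iUnion_empty] at hlub
  have hdouble : x ∅ + x ∅ ≤ x ∅ :=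
    hlub.1 ⟨{0, 1}, (Finset.sum_pair (f := fun _ => x ∅) zero_ne_one).symm⟩
  exact le_antisymm (by simpa using hdouble) (hx.nonneg .empty)

theorem map_iUnion_of_eq_empty (hx : IsObservable u n x) {C : ℕ → Set (Fin n → ℝ)}
    (hC : ∀ m, MeasurableSet (C m)) (hdisj : Pairwise (Disjoint on C)) (F₀ : Finset ℕ)
    (hF₀ : ∀ m ∉ F₀, C m = ∅) : x (⋃ m, C m) = ∑ m ∈ F₀, x (C m) := by
  refine (hx.2.2 C hC hdisj).2.unique (IsGreatest.isLUB ⟨⟨F₀, rfl⟩, ?_⟩)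
  rintro _ ⟨F, rfl⟩
  calc ∑ m ∈ F, x (C m) ≤ ∑ m ∈ F ∪ F₀, x (C m) :=
        sum_le_sum_of_subset_of_nonneg subset_union_left fun m _ _ => hx.nonneg (hC m)
    _ = ∑ m ∈ F₀, x (C m) :=
        (sum_subset subset_union_right fun m _ hm => by rw [hF₀ m hm, hx.map_empty]).symm

theorem isFinitelyAdditive (hx : IsObservable u n x) : IsFinitelyAdditive x where
  map_empty := hx.map_empty
  map_union {A B} hA hB hAB := by
    let C : ℕ → Set (Fin n → ℝ) := fun m => if m = 0 then A else if m = 1 then B else ∅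
    have hC : ∀ m, MeasurableSet (C m) := fun m => by
      dsimp only [C]
      split_ifs
      exacts [hA, hB, .empty]
    have hdisj : Pairwise (Disjoint on C) := fun i j hij => by
      dsimp only [Function.onFun, C]
      split_ifs <;> first | omega | simp [hAB.symm]
    have hunion : ⋃ m, C m = A ∪ B := by
      refine subset_antisymm (Set.iUnion_subset fun m => ?_)
        (Set.union_subset (Set.subset_iUnion C 0) (Set.subset_iUnion C 1))
      dsimp only [C]
      split_ifs
      exacts [Set.subset_union_left, Set.subset_union_right, Set.empty_subset _]
    rw [← hunion, hx.map_iUnion_of_eq_empty hC hdisj {0, 1} fun m hm => by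
      simp only [Finset.mem_insert, Finset.mem_singleton, not_or] at hm
      simp [C, hm.1, hm.2]]
    simp [C]

end IsObservable

theorem stmt_6_general {H G : Type*} [AddCommGroup H] [LinearOrder H] [IsOrderedAddMonoid H]
    [AddCommGroup G] [Lattice G] [CovariantClass G G (· + ·) (· ≤ ·)]
    (u : H)
    (n : ℕ) (x : Set (Fin n → ℝ) → H ×ₗ G)
    (hx : IsObservable u n x)
    (J : Finset (Fin n))
    (a b s : Fin n → ℝ) (hab : ∀ j ∈ J, a j ≤ b j) :
    toLex ((0 : H), (0 : G)) ≤
      ∑ S ∈ J.powerset, ((-1 : ℤ) ^ (J.card - S.card)) •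
        specRes x (fun j => if j ∈ S then b j else if j ∈ J then a j else s j) := by
  let c : Fin n → ℝ := fun j => if j ∈ J then a j else s j
  have hcb : ∀ j ∈ J, c j ≤ b j := fun j hj => by simpa [c, hj] using hab j hj
  calc toLex ((0 : H), (0 : G)) ≤ x (orthantCell c b J) :=
        hx.nonneg (measurableSet_orthantCell c b J)
    _ = _ := (hx.isFinitelyAdditive.sum_neg_one_pow_smul_orthant J hcb).symm

theorem stmt_6 {H G : Type*} [AddCommGroup H] [LinearOrder H] [IsOrderedAddMonoid H]
    [AddCommGroup G] [Lattice G] [CovariantClass G G (· + ·) (· ≤ ·)]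
    (hG : DedekindSigmaComplete G) (u : H) (hu : IsStrongUnit u)
    (n : ℕ) (hn : 1 ≤ n) (x : Set (Fin n → ℝ) → H ×ₗ G)
    (hx : IsObservable u n x)
    (J : Finset (Fin n)) (hJne : J.Nonempty) (hJpr : J ≠ Finset.univ)
    (a b s : Fin n → ℝ) (hab : ∀ j ∈ J, a j ≤ b j) :
    toLex ((0 : H), (0 : G)) ≤
      ∑ S ∈ J.powerset, ((-1 : ℤ) ^ (J.card - S.card)) •
        specRes x (fun j => if j ∈ S then b j else if j ∈ J then a j else s j) :=
  stmt_6_general u n x hx J a b s hab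
end

section
/- Let x be an n-dimensional observable on the perfect MV-algebra M = Γ(ℤ ⋉ G,(1,0)) and let F(t_1,…,t_n) = x((−∞,t_1) × ⋯ × (−∞,t_n)). Then there is a point (t^0_1,…,t^0_n) ∈ ℝⁿ such that (t^0_1,+∞) × ⋯ × (t^0_n,+∞) = {(t_1,…,t_n) ∈ ℝⁿ : F(t_1,…,t_n) ∈ Rad(M)'}. Moreover, for each i = 1,…,n and all fixed t_j > t^0_j (j ≠ i): the infimum of {F(t_1,…,t_i,…,t_n) − F(t_1,…,t^0_i,…,t_n) : t_i > t^0_i} exists in M and belongs to Rad(M)'; the infimum of {F(t_1,…,t_i,…,t_n) : t_i > t^0_i} exists in M and belongs to Rad(M)'; the element a = inf{F(t_1,…,t_n) : F(t_1,…,t_n) ∈ Rad(M)'} exists in M and belongs to Rad(M)'; and x({(t^0_1,…,t^0_n)}) ∈ Rad(M)'. -/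
/-! On a perfect MV-algebra the first coordinate of `x A` is `0` or `1`, and it is σ-additive
because a supremum of elements of `Rad(M)` stays in `Rad(M)`. So the levels of events form a
`{0,1}`-valued Borel probability measure on `ℝⁿ`, which on a standard Borel space is a Dirac mass
`δ_{t₀}`: `x A ∈ Rad(M)'` exactly when `t₀ ∈ A`. Each claim then only asks where `t₀` lies, the
infima being values of `x` on decreasing intersections of orthants (continuity from above). -/

open Function Set

open MeasureTheory Filter Topology

section LexProd

variable {H G : Type*} [AddCommGroup G] [PartialOrder G] [AddLeftMono G]

instance [AddCommGroup H] [LinearOrder H] [IsOrderedAddMonoid H] : IsOrderedAddMonoid (H ×ₗ G) :=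
  have : IsOrderedAddMonoid G := { add_le_add_left := fun _ _ h c => add_le_add_left h c }
  inferInstance

/-- If the supremum had a level `m > k`, every `toLex (m, c)` would be an upper bound of `S`,
which forces `G = 0`. -/
theorem Prod.Lex.fst_le_of_isLUB [LinearOrder H] {S : Set (H ×ₗ G)} {z : H ×ₗ G} {k : H}
    (hS : ∀ s ∈ S, (ofLex s).1 ≤ k) (hz : IsLUB S z) : (ofLex z).1 ≤ k := by
  by_contra! hkz
  have hleast : ∀ c : G, (ofLex z).2 ≤ c := fun c => by
    have hub : toLex ((ofLex z).1, c) ∈ upperBounds S := fun s hs =>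
      Prod.Lex.le_iff.2 (Or.inl ((hS s hs).trans_lt hkz))
    simpa [Prod.Lex.le_iff] using hz.2 hub
  have htriv : ∀ c : G, c = (ofLex z).2 := fun c =>
    le_antisymm (sub_nonneg.1 ((le_add_iff_nonneg_right _).1 (hleast _))) (hleast c)
  have hub : toLex (k, (ofLex z).2) ∈ upperBounds S := fun s hs =>
    Prod.Lex.le_iff.2 ((hS s hs).lt_or_eq.imp id fun h => ⟨h, (htriv _).le⟩)
  exact hkz.not_ge (Prod.Lex.monotone_fst_ofLex (hz.2 hub))

end LexProd

theorem Prod.Lex.fst_ofLex_sum {ι H G : Type*} [AddCommMonoid H] [AddCommMonoid G]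
    (s : Finset ι) (f : ι → H ×ₗ G) : (ofLex (∑ i ∈ s, f i)).1 = ∑ i ∈ s, (ofLex (f i)).1 :=
  Prod.fst_sum (s := s) (f := fun i => ofLex (f i))

theorem fst_mem_Icc_of_mem_MSet {H G : Type*} [AddCommGroup H] [LinearOrder H]
    [AddCommGroup G] [Lattice G] {u : H} {z : H ×ₗ G} (hz : z ∈ MSet u) :
    (ofLex z).1 ∈ Set.Icc 0 u :=
  ⟨Prod.Lex.monotone_fst_ofLex hz.1, Prod.Lex.monotone_fst_ofLex hz.2⟩

theorem fst_eq_zero_or_one_of_mem_MSet {G : Type*} [AddCommGroup G] [Lattice G] {z : ℤ ×ₗ G}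
    (hz : z ∈ MSet (1 : ℤ)) :
    (ofLex z).1 = 0 ∨ (ofLex z).1 = 1 := by
  have := fst_mem_Icc_of_mem_MSet hz
  simp only [Set.mem_Icc] at this
  omega

def lowerBox {n : ℕ} (p : Fin n → ℝ) : Set (Fin n → ℝ) := {s | ∀ i, s i < p i}

theorem measurableSet_lowerBox {n : ℕ} (p : Fin n → ℝ) : MeasurableSet (lowerBox p) := by
  unfold lowerBox; measurability

theorem lowerBox_mono {n : ℕ} {p q : Fin n → ℝ} (h : p ≤ q) : lowerBox p ⊆ lowerBox q :=
  fun _ hs i => (hs i).trans_le (h i)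

theorem eventually_add_one_div_lt {a b : ℝ} (h : a < b) :
    ∀ᶠ m : ℕ in atTop, a + 1 / ((m : ℝ) + 1) < b := by
  have : Tendsto (fun m : ℕ => a + 1 / ((m : ℝ) + 1)) atTop (𝓝 a) := by
    simpa using tendsto_const_nhds.add (tendsto_one_div_add_atTop_nhds_zero_nat (𝕜 := ℝ))
  exact this.eventually_lt_const h

theorem IsGLB.setOf_sub_const {α β : Type*} [AddGroup α] [PartialOrder α] [AddRightMono α]
    {P : β → Prop} {f : β → α} {z : α} (h : IsGLB {y | ∃ r, P r ∧ y = f r} z) (c : α) :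
    IsGLB {y | ∃ r, P r ∧ y = f r - c} (z - c) := by
  have himage :
      {y | ∃ r, P r ∧ y = f r - c} = OrderIso.subRight c '' {y | ∃ r, P r ∧ y = f r} := by
    ext y
    constructor
    · rintro ⟨r, hr, rfl⟩
      exact ⟨_, ⟨r, hr, rfl⟩, rfl⟩
    · rintro ⟨_, ⟨r, hr, rfl⟩, rfl⟩
      exact ⟨r, hr, rfl⟩
  rw [himage]
  exact (OrderIso.subRight c).isGLB_image'.2 h

section Observable

variable {H : Type*} [AddCommGroup H] [LinearOrder H] {G : Type*} [AddCommGroup G] [Lattice G]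
  {u : H} {n : ℕ} {x : Set (Fin n → ℝ) → H ×ₗ G}

theorem IsObservable.nonneg_s8 (hx : IsObservable u n x) {A : Set (Fin n → ℝ)}
    (hA : MeasurableSet A) : 0 ≤ x A :=
  (hx.1 A hA).1

theorem IsObservable.sum_fst_le_fst_iUnion (hx : IsObservable u n x)
    {A : ℕ → Set (Fin n → ℝ)} (hA : ∀ m, MeasurableSet (A m)) (hdisj : Pairwise (Disjoint on A))
    (F : Finset ℕ) : ∑ m ∈ F, (ofLex (x (A m))).1 ≤ (ofLex (x (⋃ m, A m))).1 := by
  rw [← Prod.Lex.fst_ofLex_sum]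
  exact Prod.Lex.monotone_fst_ofLex ((hx.2.2 A hA hdisj).2.1 ⟨F, rfl⟩)

variable [IsOrderedAddMonoid H] [CovariantClass G G (· + ·) (· ≤ ·)]

theorem IsObservable.map_empty_s8 (hx : IsObservable u n x) : x ∅ = 0 := by
  have hlub := (hx.2.2 (fun _ => ∅) (fun _ => .empty) fun _ _ _ => disjoint_bot_left).2
  rw [Set.iUnion_empty] at hlub
  have htwice : x ∅ + x ∅ ≤ x ∅ :=
    hlub.1 ⟨{0, 1}, (Finset.sum_pair (f := fun _ => x ∅) zero_ne_one).symm⟩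
  exact le_antisymm (add_le_iff_nonpos_left.1 htwice) (hx.nonneg_s8 .empty)

theorem IsObservable.map_iUnion_eq_sum (hx : IsObservable u n x) {A : ℕ → Set (Fin n → ℝ)}
    (hA : ∀ m, MeasurableSet (A m)) (hdisj : Pairwise (Disjoint on A)) {F : Finset ℕ}
    (hF : ∀ m ∉ F, A m = ∅) : x (⋃ m, A m) = ∑ m ∈ F, x (A m) := by
  refine (hx.2.2 A hA hdisj).2.unique (IsGreatest.isLUB ⟨⟨F, rfl⟩, ?_⟩)
  rintro _ ⟨F', rfl⟩
  calc ∑ m ∈ F', x (A m) ≤ ∑ m ∈ F ∪ F', x (A m) :=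
        Finset.sum_le_sum_of_subset_of_nonneg Finset.subset_union_right
          fun m _ _ => hx.nonneg_s8 (hA m)
    _ = ∑ m ∈ F, x (A m) :=
        (Finset.sum_subset Finset.subset_union_left fun m _ hm => by
          rw [hF m hm, hx.map_empty_s8]).symm

theorem IsObservable.map_union (hx : IsObservable u n x) {A B : Set (Fin n → ℝ)}
    (hA : MeasurableSet A) (hB : MeasurableSet B) (hAB : Disjoint A B) :
    x (A ∪ B) = x A + x B := by
  let C : ℕ → Set (Fin n → ℝ) := fun m => if m = 0 then A else if m = 1 then B else ∅
  have hC : ∀ m, MeasurableSet (C m) := fun m => by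
    dsimp only [C]; split_ifs <;> simp [hA, hB]
  have hdisj : Pairwise (Disjoint on C) := fun i j hij => by
    dsimp only [C, onFun]; split_ifs <;> first | omega | simp [hAB.symm]
  have hU : ⋃ m, C m = A ∪ B := by
    ext s
    simp only [Set.mem_iUnion, Set.mem_union, C]
    constructor
    · rintro ⟨m, hm⟩
      split_ifs at hm <;> simp_all
    · rintro (h | h)
      exacts [⟨0, by simpa⟩, ⟨1, by simpa⟩]
  have hsum := hx.map_iUnion_eq_sum hC hdisj (F := Finset.range 2) fun m hm => by
    simp only [Finset.mem_range, C] at hm ⊢; split_ifs <;> first | omega | rfl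
  simpa [hU, Finset.sum_range_succ, C] using hsum

theorem IsObservable.mono (hx : IsObservable u n x) {A B : Set (Fin n → ℝ)}
    (hA : MeasurableSet A) (hB : MeasurableSet B) (hAB : A ⊆ B) : x A ≤ x B := by
  rw [← Set.union_sdiff_cancel hAB, hx.map_union hA (hB.diff hA) Set.disjoint_sdiff_right]
  exact le_add_of_nonneg_right (hx.nonneg_s8 (hB.diff hA))

theorem IsObservable.map_diff (hx : IsObservable u n x) {A B : Set (Fin n → ℝ)}
    (hA : MeasurableSet A) (hB : MeasurableSet B) (hAB : A ⊆ B) : x (B \ A) = x B - x A := by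
  rw [eq_sub_iff_add_eq', ← hx.map_union hA (hB.diff hA) Set.disjoint_sdiff_right,
    Set.union_sdiff_cancel hAB]

theorem IsObservable.isLUB_iUnion (hx : IsObservable u n x) {C : ℕ → Set (Fin n → ℝ)}
    (hC : ∀ m, MeasurableSet (C m)) (hmono : Monotone C) :
    IsLUB (Set.range fun m => x (C m)) (x (⋃ m, C m)) := by
  have hD := MeasurableSet.disjointed hC
  have hpartial : ∀ N, ∑ m ∈ Finset.range (N + 1), x (disjointed C m) = x (C N) := by
    intro N
    induction N with
    | zero => simp [disjointed_zero]
    | succ N ih =>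
      have hsucc : disjointed C (N + 1) = C (N + 1) \ C N := hmono.disjointed_succ (not_isMax N)
      rw [Finset.sum_range_succ, ih, hsucc,
        ← hx.map_union (hC N) ((hC _).diff (hC N)) Set.disjoint_sdiff_right,
        Set.union_sdiff_cancel (hmono (Nat.le_add_right N 1))]
  rw [← iUnion_disjointed]
  refine (isLUB_congr ?_).1 (hx.2.2 _ hD (disjoint_disjointed C)).2
  ext b
  refine ⟨fun hb => ?_, fun hb => ?_⟩
  · rintro _ ⟨N, rfl⟩
    exact hb ⟨_, (hpartial N).symm⟩
  · rintro _ ⟨F, rfl⟩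
    obtain ⟨N, hN⟩ := F.exists_nat_subset_range
    calc ∑ m ∈ F, x (disjointed C m) ≤ ∑ m ∈ Finset.range (N + 1), x (disjointed C m) :=
          Finset.sum_le_sum_of_subset_of_nonneg
            (hN.trans (Finset.range_subset_range.2 N.le_succ)) fun m _ _ => hx.nonneg_s8 (hD m)
      _ ≤ b := hpartial N ▸ hb ⟨N, rfl⟩

/-- Pass to the complements `B 0 \ B m` and use continuity from below. -/
theorem IsObservable.isGLB_iInter (hx : IsObservable u n x) {B : ℕ → Set (Fin n → ℝ)}
    (hB : ∀ m, MeasurableSet (B m)) (hanti : Antitone B) :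
    IsGLB (Set.range fun m => x (B m)) (x (⋂ m, B m)) := by
  have hI : MeasurableSet (⋂ m, B m) := .iInter hB
  have hlub := hx.isLUB_iUnion (fun m => (hB 0).diff (hB m))
    fun _ _ hmk => Set.sdiff_subset_sdiff_right (hanti hmk)
  rw [← Set.sdiff_iInter, hx.map_diff hI (hB 0) (Set.iInter_subset _ 0)] at hlub
  refine ⟨?_, fun w hw => ?_⟩
  · rintro _ ⟨m, rfl⟩
    exact hx.mono hI (hB m) (Set.iInter_subset _ m)
  · refine (sub_le_sub_iff_left (x (B 0))).1 (hlub.2 ?_)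
    rintro _ ⟨m, rfl⟩
    change x (B 0 \ B m) ≤ _
    rw [hx.map_diff (hB m) (hB 0) (hanti (Nat.zero_le m))]
    exact sub_le_sub_left (hw ⟨m, rfl⟩) _

theorem IsObservable.exists_fst_pos_of_fst_iUnion_pos (hx : IsObservable u n x)
    {A : ℕ → Set (Fin n → ℝ)} (hA : ∀ m, MeasurableSet (A m)) (hdisj : Pairwise (Disjoint on A))
    (hpos : 0 < (ofLex (x (⋃ m, A m))).1) : ∃ m, 0 < (ofLex (x (A m))).1 := by
  by_contra! hzero
  refine hpos.not_ge (Prod.Lex.fst_le_of_isLUB ?_ (hx.2.2 A hA hdisj).2)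
  rintro _ ⟨F, rfl⟩
  rw [Prod.Lex.fst_ofLex_sum]
  exact Finset.sum_nonpos fun m _ => hzero m

theorem IsObservable.isGLB_specRes_image (hx : IsObservable u n x) {P : Set (Fin n → ℝ)}
    {q : ℕ → Fin n → ℝ} (hq : Antitone q) (hqP : ∀ m, q m ∈ P) (hP : ∀ p ∈ P, ∃ m, q m ≤ p) :
    IsGLB (specRes x '' P) (x (⋂ m, lowerBox (q m))) := by
  have hglb := hx.isGLB_iInter (fun m => measurableSet_lowerBox (q m))
    fun _ _ h => lowerBox_mono (hq h)
  refine ⟨?_, fun w hw => hglb.2 ?_⟩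
  · rintro _ ⟨p, hp, rfl⟩
    obtain ⟨m, hm⟩ := hP p hp
    exact (hglb.1 ⟨m, rfl⟩).trans
      (hx.mono (measurableSet_lowerBox _) (measurableSet_lowerBox _) (lowerBox_mono hm))
  · rintro _ ⟨m, rfl⟩
    exact hw ⟨q m, hqP m, rfl⟩

end Observable

section Perfect

variable {G : Type*} [AddCommGroup G] [Lattice G] {n : ℕ} {x : Set (Fin n → ℝ) → ℤ ×ₗ G}

theorem IsObservable.fst_ne_one_of_fst_iUnion_ne_one (hx : IsObservable (1 : ℤ) n x)
    {A : ℕ → Set (Fin n → ℝ)} (hA : ∀ m, MeasurableSet (A m)) (hdisj : Pairwise (Disjoint on A))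
    (h1 : (ofLex (x (⋃ m, A m))).1 ≠ 1) (m : ℕ) : (ofLex (x (A m))).1 ≠ 1 := by
  have hle := hx.sum_fst_le_fst_iUnion hA hdisj {m}
  rw [Finset.sum_singleton] at hle
  rcases fst_eq_zero_or_one_of_mem_MSet (hx.1 _ (.iUnion hA)) with h | h <;> omega

variable [CovariantClass G G (· + ·) (· ≤ ·)]

theorem IsObservable.existsUnique_fst_eq_one (hx : IsObservable (1 : ℤ) n x)
    {A : ℕ → Set (Fin n → ℝ)} (hA : ∀ m, MeasurableSet (A m)) (hdisj : Pairwise (Disjoint on A))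
    (h1 : (ofLex (x (⋃ m, A m))).1 = 1) : ∃! m, (ofLex (x (A m))).1 = 1 := by
  obtain ⟨m₀, hpos⟩ := hx.exists_fst_pos_of_fst_iUnion_pos hA hdisj (h1 ▸ one_pos)
  have hm₀ : (ofLex (x (A m₀))).1 = 1 := by
    rcases fst_eq_zero_or_one_of_mem_MSet (hx.1 _ (hA m₀)) with h | h <;> omega
  refine ⟨m₀, hm₀, fun m hm => by_contra fun hne => ?_⟩
  have := hx.sum_fst_le_fst_iUnion hA hdisj {m, m₀}
  rw [Finset.sum_pair hne, hm, hm₀, h1] at this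
  omega

noncomputable def IsObservable.levelMeasure (hx : IsObservable (1 : ℤ) n x) :
    Measure (Fin n → ℝ) :=
  Measure.ofMeasurable (fun A _ => if (ofLex (x A)).1 = 1 then 1 else 0)
    (by simp [hx.map_empty_s8]) fun A hA hdisj => by
      by_cases h1 : (ofLex (x (⋃ m, A m))).1 = 1
      · obtain ⟨m₀, hm₀, huniq⟩ := hx.existsUnique_fst_eq_one hA hdisj h1
        rw [if_pos h1, tsum_eq_single m₀ fun m hm => if_neg fun h => hm (huniq m h), if_pos hm₀]
      · simp [h1, hx.fst_ne_one_of_fst_iUnion_ne_one hA hdisj h1]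

theorem IsObservable.levelMeasure_apply (hx : IsObservable (1 : ℤ) n x) {A : Set (Fin n → ℝ)}
    (hA : MeasurableSet A) : hx.levelMeasure A = if (ofLex (x A)).1 = 1 then 1 else 0 :=
  Measure.ofMeasurable_apply A hA

theorem IsObservable.exists_mem_MLevel_one_iff_mem (hx : IsObservable (1 : ℤ) n x) :
    ∃ t₀ : Fin n → ℝ, ∀ A, MeasurableSet A → (x A ∈ MLevel (1 : ℤ) 1 ↔ t₀ ∈ A) := by
  have : IsZeroOneMeasure hx.levelMeasure :=
    ⟨fun A hA => by rw [hx.levelMeasure_apply hA]; split_ifs <;> simp⟩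
  have : NeZero hx.levelMeasure := ⟨fun h => by
    simpa [hx.levelMeasure_apply .univ, hx.2.1] using congrArg (· Set.univ) h⟩
  obtain ⟨t₀, ht₀⟩ := IsZeroOneMeasure.exists_eq_dirac (μ := hx.levelMeasure)
  refine ⟨t₀, fun A hA => ?_⟩
  have hlevel := hx.levelMeasure_apply hA
  rw [ht₀, Measure.dirac_apply' _ hA] at hlevel
  rw [MLevel, Set.mem_ofPred_eq, and_iff_right (hx.1 A hA)]
  by_cases ht : t₀ ∈ A <;> by_cases h1 : (ofLex (x A)).1 = 1 <;> simp_all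

end Perfect

section DiracPoint

variable {G : Type*} [AddCommGroup G] [Lattice G] [CovariantClass G G (· + ·) (· ≤ ·)]
  {n : ℕ} {x : Set (Fin n → ℝ) → ℤ ×ₗ G} {t₀ : Fin n → ℝ}

theorem IsObservable.exists_isGLB_specRes_update (hx : IsObservable (1 : ℤ) n x)
    (ht₀ : ∀ A, MeasurableSet A → (x A ∈ MLevel (1 : ℤ) 1 ↔ t₀ ∈ A)) (i : Fin n)
    {t : Fin n → ℝ} (ht : ∀ j, j ≠ i → t₀ j < t j) :
    (∃ z ∈ MLevel (1 : ℤ) 1, IsGLB {y | ∃ r : ℝ, t₀ i < r ∧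
        y = specRes x (update t i r) - specRes x (update t i (t₀ i))} z) ∧
      (∃ z ∈ MLevel (1 : ℤ) 1, IsGLB {y | ∃ r : ℝ, t₀ i < r ∧ y = specRes x (update t i r)} z) := by
  set q : ℕ → Fin n → ℝ := fun m => update t i (t₀ i + 1 / ((m : ℝ) + 1))
  have hq : Antitone q := fun m k hmk =>
    update_le_update_iff.2 ⟨by gcongr, fun _ _ => le_rfl⟩
  have hS : {y | ∃ r : ℝ, t₀ i < r ∧ y = specRes x (update t i r)} =
      specRes x '' (update t i '' Set.Ioi (t₀ i)) := by
    ext; simp [eq_comm]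
  have hglb : IsGLB {y | ∃ r : ℝ, t₀ i < r ∧ y = specRes x (update t i r)}
      (x (⋂ m, lowerBox (q m))) := by
    rw [hS]
    refine hx.isGLB_specRes_image hq
      (fun m => ⟨_, Set.mem_Ioi.2 (lt_add_of_pos_right _ Nat.one_div_pos_of_nat), rfl⟩) ?_
    rintro _ ⟨r, hr, rfl⟩
    obtain ⟨m, hm⟩ := (eventually_add_one_div_lt hr).exists
    exact ⟨m, update_le_update_iff.2 ⟨hm.le, fun _ _ => le_rfl⟩⟩
  set I := ⋂ m, lowerBox (q m)
  have hI : MeasurableSet I := .iInter fun m => measurableSet_lowerBox _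
  have ht₀I : t₀ ∈ I := Set.mem_iInter.2 fun m j => by
    rcases eq_or_ne j i with rfl | hj
    · simpa [q] using Nat.cast_add_one_pos (α := ℝ) m
    · simpa [q, hj] using ht j hj
  set C := lowerBox (update t i (t₀ i))
  have hCI : C ⊆ I := Set.subset_iInter fun m => lowerBox_mono <|
    update_le_update_iff.2 ⟨(lt_add_of_pos_right _ Nat.one_div_pos_of_nat).le, fun _ _ => le_rfl⟩
  have ht₀C : t₀ ∉ C := fun h => by simpa using h i
  refine ⟨⟨x I - x C, ?_, ?_⟩, x I, (ht₀ I hI).2 ht₀I, hglb⟩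
  · rw [← hx.map_diff (measurableSet_lowerBox _) hI hCI]
    exact (ht₀ _ (hI.diff (measurableSet_lowerBox _))).2 ⟨ht₀I, ht₀C⟩
  · exact hglb.setOf_sub_const (x C)

theorem IsObservable.exists_isGLB_specRes_of_mem_MLevel (hx : IsObservable (1 : ℤ) n x)
    (ht₀ : ∀ A, MeasurableSet A → (x A ∈ MLevel (1 : ℤ) 1 ↔ t₀ ∈ A)) :
    ∃ a ∈ MLevel (1 : ℤ) 1,
      IsGLB {y | ∃ p : Fin n → ℝ, specRes x p ∈ MLevel (1 : ℤ) 1 ∧ y = specRes x p} a := by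
  set q : ℕ → Fin n → ℝ := fun m j => t₀ j + 1 / ((m : ℝ) + 1)
  have hqt₀ : ∀ m j, t₀ j < q m j := fun m j => lt_add_of_pos_right _ Nat.one_div_pos_of_nat
  have hS : {y | ∃ p : Fin n → ℝ, specRes x p ∈ MLevel (1 : ℤ) 1 ∧ y = specRes x p} =
      specRes x '' {p | ∀ i, t₀ i < p i} := by
    ext y
    simp only [Set.mem_image, Set.mem_ofPred_eq, eq_comm (a := y)]
    exact exists_congr fun p => and_congr_left' (ht₀ _ (measurableSet_lowerBox p))
  refine ⟨_, (ht₀ _ (.iInter fun m => measurableSet_lowerBox _)).2 (Set.mem_iInter.2 hqt₀), ?_⟩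
  rw [hS]
  refine hx.isGLB_specRes_image (fun m k hmk j => by dsimp only [q]; gcongr) hqt₀ fun p hp => ?_
  obtain ⟨m, hm⟩ := (eventually_all.2 fun j => eventually_add_one_div_lt (hp j)).exists
  exact ⟨m, fun j => (hm j).le⟩

end DiracPoint

theorem stmt_8_general {G : Type*}
    [AddCommGroup G] [Lattice G] [CovariantClass G G (· + ·) (· ≤ ·)]
    (n : ℕ)
    (x : Set (Fin n → ℝ) → ℤ ×ₗ G) (hx : IsObservable (1 : ℤ) n x) :
    ∃ t0 : Fin n → ℝ,
      {p : Fin n → ℝ | ∀ i, t0 i < p i} =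
        {p : Fin n → ℝ | specRes x p ∈ MLevel (1 : ℤ) 1} ∧
      (∀ i : Fin n, ∀ t : Fin n → ℝ, (∀ j, j ≠ i → t0 j < t j) →
        (∃ z ∈ MLevel (1 : ℤ) 1,
          IsGLB {y | ∃ r : ℝ, t0 i < r ∧
            y = specRes x (Function.update t i r) - specRes x (Function.update t i (t0 i))} z) ∧
        (∃ z ∈ MLevel (1 : ℤ) 1,
          IsGLB {y | ∃ r : ℝ, t0 i < r ∧ y = specRes x (Function.update t i r)} z)) ∧
      (∃ a ∈ MLevel (1 : ℤ) 1,
        IsGLB {y | ∃ p : Fin n → ℝ, specRes x p ∈ MLevel (1 : ℤ) 1 ∧ y = specRes x p} a) ∧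
      x {t0} ∈ MLevel (1 : ℤ) 1 := by
  obtain ⟨t₀, ht₀⟩ := hx.exists_mem_MLevel_one_iff_mem
  exact ⟨t₀, Set.ext fun p => (ht₀ _ (measurableSet_lowerBox p)).symm,
    fun i _ ht => hx.exists_isGLB_specRes_update ht₀ i ht,
    hx.exists_isGLB_specRes_of_mem_MLevel ht₀,
    (ht₀ _ (measurableSet_singleton t₀)).2 rfl⟩

theorem stmt_8 {G : Type*}
    [AddCommGroup G] [Lattice G] [CovariantClass G G (· + ·) (· ≤ ·)]
    (hG : DedekindSigmaComplete G) (n : ℕ) (hn : 1 ≤ n)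
    (x : Set (Fin n → ℝ) → ℤ ×ₗ G) (hx : IsObservable (1 : ℤ) n x) :
    ∃ t0 : Fin n → ℝ,
      {p : Fin n → ℝ | ∀ i, t0 i < p i} =
        {p : Fin n → ℝ | specRes x p ∈ MLevel (1 : ℤ) 1} ∧
      (∀ i : Fin n, ∀ t : Fin n → ℝ, (∀ j, j ≠ i → t0 j < t j) →
        (∃ z ∈ MLevel (1 : ℤ) 1,
          IsGLB {y | ∃ r : ℝ, t0 i < r ∧
            y = specRes x (Function.update t i r) - specRes x (Function.update t i (t0 i))} z) ∧
        (∃ z ∈ MLevel (1 : ℤ) 1,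
          IsGLB {y | ∃ r : ℝ, t0 i < r ∧ y = specRes x (Function.update t i r)} z)) ∧
      (∃ a ∈ MLevel (1 : ℤ) 1,
        IsGLB {y | ∃ p : Fin n → ℝ, specRes x p ∈ MLevel (1 : ℤ) 1 ∧ y = specRes x p} a) ∧
      x {t0} ∈ MLevel (1 : ℤ) 1 :=
  stmt_8_general n x hx
end

section
/- Let F be a two-dimensional spectral resolution on the k-perfect MV-algebra M = Γ(ℤ ⋉ G,(k,0)) and let (s_0,t_0) be a characteristic point of F. If t > t_0, s_1 ≤ s_0 < s_2, F(s_1,t) ∈ M_m and F(s_2,t) ∈ M_j, then m < j. (Analogously, if s > s_0, t_1 ≤ t_0 < t_2, F(s,t_1) ∈ M_m and F(s,t_2) ∈ M_j, then m < j.) -/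
open Function Set

/-!
Read the first coordinate of `F` as an integer-valued function `φ` on `ℝ²`: it is monotone,
2-increasing (because `V(F, [a, b)) ≥ 0`) and left continuous. Let `(s₀, t₀)` be the
characteristic point of `(a, b) ∈ T_h`, `h > 0`. Left continuity puts `(s₀, b)` and `(a, t₀)`
strictly below level `h`, so `s₀ < a` and `t₀ < b`, while 2-increasingness on the rectangle with
corners `(x, y)` and `(a, b)` puts every point of `(s₀, a] × (t₀, b]` at level at least `h`.
Hence on each horizontal line slightly above `t₀` the level jumps across `s₀`, and
2-increasingness carries such a jump to every higher line. The second half is the first one for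
`φ` with its variables swapped.
-/

namespace Prod.Lex

variable {G : Type*} [AddCommGroup G] [Preorder G] [IsOrderedAddMonoid G]

/-- If the largest first coordinate `n` occurring in `S` were smaller, every `toLex (n + 1, g)`
would bound `S`, making `(ofLex a).2` least in `G`; in a group it is then greatest as well, and
`toLex (n, (ofLex a).2)` bounds `S`. -/
theorem exists_fst_eq_of_isLUB {S : Set (ℤ ×ₗ G)} {a : ℤ ×ₗ G} (ha : IsLUB S a)
    (hS : S.Nonempty) : ∃ y ∈ S, (ofLex y).1 = (ofLex a).1 := by
  obtain ⟨_, ⟨y, hyS, rfl⟩, hmax⟩ :=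
    Int.exists_greatest_of_bdd (P := fun n => ∃ y ∈ S, (ofLex y).1 = n)
    ⟨(ofLex a).1, by rintro _ ⟨y, hy, rfl⟩; exact monotone_fst _ _ (ha.1 hy)⟩
    (let ⟨y, hy⟩ := hS; ⟨_, y, hy, rfl⟩)
  have hfst : ∀ z ∈ S, (ofLex z).1 ≤ (ofLex y).1 := fun z hz => hmax _ ⟨z, hz, rfl⟩
  refine ⟨y, hyS, (monotone_fst _ _ (ha.1 hyS)).antisymm ?_⟩
  by_contra! hlt
  have hbot : ∀ g : G, (ofLex a).2 ≤ g := by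
    intro g
    have hle : a ≤ toLex ((ofLex y).1 + 1, g) :=
      ha.2 fun z hz => le_iff.2 (Or.inl (Int.lt_add_one_of_le (hfst z hz)))
    rcases le_iff.1 hle with h | h
    · exact absurd h (by simpa using hlt)
    · exact h.2
  have htop : ∀ g : G, g ≤ (ofLex a).2 := fun g => by
    simpa using hbot ((ofLex a).2 - (g - (ofLex a).2))
  have hle : a ≤ toLex ((ofLex y).1, (ofLex a).2) := ha.2 fun z hz =>
    le_iff.2 ((hfst z hz).lt_or_eq.imp id fun h => ⟨h, htop _⟩)
  exact absurd (monotone_fst _ _ hle) (by simpa using hlt)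

theorem exists_fst_eq_of_isGLB {S : Set (ℤ ×ₗ G)} {a : ℤ ×ₗ G} (ha : IsGLB S a)
    (hS : S.Nonempty) : ∃ y ∈ S, (ofLex y).1 = (ofLex a).1 := by
  obtain ⟨y, hy, hya⟩ := exists_fst_eq_of_isLUB ha.neg hS.neg
  exact ⟨-y, hy, by simpa using congrArg Neg.neg hya⟩

end Prod.Lex

theorem Fin.update_two_zero {α : Type*} (s : Fin 2 → α) (r : α) :
    Function.update s 0 r = ![r, s 1] := by
  funext i; fin_cases i <;> rfl

theorem Fin.update_two_one {α : Type*} (s : Fin 2 → α) (r : α) :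
    Function.update s 1 r = ![s 0, r] := by
  funext i; fin_cases i <;> rfl

/-- Integer-valued two-dimensional distribution functions; `exists_lt_eq` is left continuity,
in the form it takes for integer values. -/
structure IsIntDistribFun (φ : ℝ → ℝ → ℤ) : Prop where
  mono : ∀ ⦃x x' y y' : ℝ⦄, x ≤ x' → y ≤ y' → φ x y ≤ φ x' y'
  supermodular : ∀ ⦃x x' y y' : ℝ⦄, x ≤ x' → y ≤ y' → φ x y' + φ x' y ≤ φ x y + φ x' y'
  exists_lt_eq : ∀ x y, ∃ x' < x, ∃ y' < y, φ x' y' = φ x y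
  exists_nonpos_left : ∀ y, ∃ x, φ x y ≤ 0
  exists_nonpos_right : ∀ x, ∃ y, φ x y ≤ 0

/-- For `φ = level F` and `(a, b) ∈ T_h` this is `π₁ʰ(a, b)`, and `levelInf (swap φ) b a` is
`π₂ʰ(a, b)`. -/
noncomputable def levelInf (φ : ℝ → ℝ → ℤ) (a b : ℝ) : ℝ :=
  sInf {x | φ x b = φ a b}

namespace IsIntDistribFun

variable {φ : ℝ → ℝ → ℤ} (hφ : IsIntDistribFun φ)
include hφ

theorem swap : IsIntDistribFun (Function.swap φ) where
  mono _ _ _ _ hx hy := hφ.mono hy hx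
  supermodular _ _ _ _ hx hy := by
    have := hφ.supermodular hy hx
    simp only [Function.swap]
    omega
  exists_lt_eq x y := by
    obtain ⟨y', hy', x', hx', h⟩ := hφ.exists_lt_eq y x
    exact ⟨x', hx', y', hy', h⟩
  exists_nonpos_left := hφ.exists_nonpos_right
  exists_nonpos_right := hφ.exists_nonpos_left

theorem bddBelow_levelSet {a b : ℝ} (hpos : 0 < φ a b) : BddBelow {x | φ x b = φ a b} := by
  obtain ⟨x₀, hx₀⟩ := hφ.exists_nonpos_left b
  refine ⟨x₀, fun x (hx : φ x b = φ a b) => le_of_not_gt fun hlt => ?_⟩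
  have := hφ.mono hlt.le le_rfl (y := b)
  omega

theorem levelInf_le {a b : ℝ} (hpos : 0 < φ a b) : levelInf φ a b ≤ a :=
  csInf_le (hφ.bddBelow_levelSet hpos) rfl

/-- Left continuity: a point of the level set to the lower left of `(levelInf φ a b, b)` would
lie on the horizontal section left of its infimum. -/
theorem apply_levelInf_lt {a b : ℝ} (hpos : 0 < φ a b) : φ (levelInf φ a b) b < φ a b := by
  refine (hφ.mono (hφ.levelInf_le hpos) le_rfl).lt_of_ne fun heq => ?_
  obtain ⟨x', hx', y', hy', hx'y'⟩ := hφ.exists_lt_eq (levelInf φ a b) b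
  have hmem : φ x' b = φ a b := le_antisymm
    ((hφ.mono hx'.le le_rfl).trans heq.le) (heq ▸ hx'y' ▸ hφ.mono le_rfl hy'.le)
  exact hx'.not_ge (csInf_le (hφ.bddBelow_levelSet hpos) hmem)

theorem levelInf_lt {a b : ℝ} (hpos : 0 < φ a b) : levelInf φ a b < a :=
  (hφ.levelInf_le hpos).lt_of_ne fun h => (hφ.apply_levelInf_lt hpos).ne (by rw [h])

theorem apply_eq_of_levelInf_lt {a b x : ℝ} (hx : levelInf φ a b < x) (hxa : x ≤ a) :
    φ x b = φ a b := by
  obtain ⟨x', hx'eq, hx'x⟩ := exists_lt_of_csInf_lt (s := {x | φ x b = φ a b}) ⟨a, rfl⟩ hx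
  exact le_antisymm (hφ.mono hxa le_rfl) (hx'eq ▸ hφ.mono hx'x.le le_rfl)

theorem le_apply_of_levelInf_lt {a b x y : ℝ} (hx : levelInf φ a b < x) (hxa : x ≤ a)
    (hy : levelInf (Function.swap φ) b a < y) (hyb : y ≤ b) : φ a b ≤ φ x y := by
  have hxb := hφ.apply_eq_of_levelInf_lt hx hxa
  have hay : φ a y = φ a b := hφ.swap.apply_eq_of_levelInf_lt hy hyb
  have := hφ.supermodular hxa hyb
  omega

theorem apply_lt_apply_of_levelInf {a b : ℝ} (hpos : 0 < φ a b) {t s₁ s₂ : ℝ}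
    (ht : levelInf (Function.swap φ) b a < t) (hs₁ : s₁ ≤ levelInf φ a b)
    (hs₂ : levelInf φ a b < s₂) : φ s₁ t < φ s₂ t := by
  have hy : levelInf (Function.swap φ) b a < min t b :=
    lt_min ht (hφ.swap.levelInf_lt (a := b) (b := a) hpos)
  have hbelow : φ s₁ (min t b) < φ a b :=
    (hφ.mono hs₁ (min_le_right t b)).trans_lt (hφ.apply_levelInf_lt hpos)
  have habove : φ a b ≤ φ s₂ (min t b) :=
    (hφ.le_apply_of_levelInf_lt (lt_min hs₂ (hφ.levelInf_lt hpos)) (min_le_right s₂ a) hy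
      (min_le_right t b)).trans (hφ.mono (min_le_left s₂ a) le_rfl)
  have := hφ.supermodular (hs₁.trans hs₂.le) (min_le_left t b)
  omega

end IsIntDistribFun

section SpectralResolution

theorem boxSum_fin_two {H G : Type*} [AddCommGroup H] [AddCommGroup G]
    (F : (Fin 2 → ℝ) → H ×ₗ G) (x₁ y₁ x₂ y₂ : ℝ) :
    boxSum F ![x₁, y₁] ![x₂, y₂] = F ![x₁, y₁] - F ![x₂, y₁] - F ![x₁, y₂] + F ![x₂, y₂] := by
  have huniv : (Finset.univ : Finset (Finset (Fin 2))) = {∅, {0}, {1}, Finset.univ} := by decide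
  have hcorner (S : Finset (Fin 2)) : (fun i => if i ∈ S then ![x₂, y₂] i else ![x₁, y₁] i) =
      ![if 0 ∈ S then x₂ else x₁, if 1 ∈ S then y₂ else y₁] := by
    funext i; fin_cases i <;> rfl
  rw [boxSum, huniv, Finset.sum_insert (by decide), Finset.sum_insert (by decide),
    Finset.sum_insert (by decide), Finset.sum_singleton]
  simp only [hcorner]
  simp only [Int.reduceNeg, Finset.card_empty, tsub_zero, even_two, Even.neg_pow, one_pow,
    Nat.succ_eq_add_one, Nat.reduceAdd, Fin.isValue, Finset.notMem_empty, ↓reduceIte, one_smul,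
    Finset.card_singleton, Nat.add_one_sub_one, pow_one, Finset.mem_singleton, one_ne_zero,
    neg_smul, zero_ne_one, Finset.card_univ, Fintype.card_fin, tsub_self, pow_zero, Finset.mem_univ]
  abel

variable {G : Type*} [AddCommGroup G] [Lattice G] {u : ℤ} {F : (Fin 2 → ℝ) → ℤ ×ₗ G}

def level (F : (Fin 2 → ℝ) → ℤ ×ₗ G) (x y : ℝ) : ℤ :=
  (ofLex (F ![x, y])).1

theorem isIntDistribFun_level [IsOrderedAddMonoid G] (hF : IsSpectralResolution u 2 F) :
    IsIntDistribFun (level F) where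
  mono x x' y y' hx hy := Prod.Lex.monotone_fst _ _ (hF.1 (Fin.forall_fin_two.2 ⟨hx, hy⟩))
  supermodular x x' y y' hx hy := by
    have hbox := Prod.Lex.monotone_fst _ _
      (hF.2.2.2.2 ![x, y] ![x', y'] (Fin.forall_fin_two.2 ⟨hx, hy⟩)).1
    rw [boxSum_fin_two] at hbox
    simp only [level]
    simp only [ofLex_toLex, ofLex_add, ofLex_sub, Prod.fst_add, Prod.fst_sub] at hbox
    omega
  exists_lt_eq x y := by
    obtain ⟨_, ⟨s, hs, rfl⟩, hfst⟩ := Prod.Lex.exists_fst_eq_of_isLUB (hF.2.2.1 ![x, y])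
      ⟨_, ![x - 1, y - 1], Fin.forall_fin_two.2 ⟨sub_one_lt x, sub_one_lt y⟩, rfl⟩
    refine ⟨s 0, hs 0, s 1, hs 1, ?_⟩
    rw [level, level, ← hfst, ← Fin.update_two_zero s (s 0), Function.update_eq_self]
  exists_nonpos_left y := by
    obtain ⟨_, ⟨r, rfl⟩, hfst⟩ := Prod.Lex.exists_fst_eq_of_isGLB (hF.2.2.2.1 0 ![0, y])
      ⟨_, 0, rfl⟩
    rw [Fin.update_two_zero] at hfst
    exact ⟨r, hfst.le⟩
  exists_nonpos_right x := by
    obtain ⟨_, ⟨r, rfl⟩, hfst⟩ := Prod.Lex.exists_fst_eq_of_isGLB (hF.2.2.2.1 1 ![x, 0])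
      ⟨_, 0, rfl⟩
    rw [Fin.update_two_one] at hfst
    exact ⟨r, hfst.le⟩

theorem mem_TSet_iff (hF : IsSpectralResolution u 2 F) {h : ℤ} {s : Fin 2 → ℝ} :
    s ∈ TSet u F h ↔ (ofLex (F s)).1 = h :=
  ⟨fun hs => hs.2, fun hs => ⟨⟨(hF.2.2.2.1 0 s).1 ⟨s 0, by rw [Function.update_eq_self]⟩,
    hF.2.1.1 ⟨s, rfl⟩⟩, hs⟩⟩

theorem level_eq_of_mem_TSet {h : ℤ} {s : Fin 2 → ℝ} (hs : s ∈ TSet u F h) :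
    level F (s 0) (s 1) = h := by
  rw [level, ← Fin.update_two_zero, Function.update_eq_self]
  exact hs.2

theorem proj_zero_eq_levelInf (hF : IsSpectralResolution u 2 F) {h : ℤ} {s : Fin 2 → ℝ}
    (hs : s ∈ TSet u F h) : proj u F h s 0 = levelInf (level F) (s 0) (s 1) := by
  rw [proj, levelInf, level_eq_of_mem_TSet hs]
  congr 1
  ext r
  show _ ∈ TSet u F h ↔ level F r (s 1) = h
  rw [mem_TSet_iff hF, Fin.update_two_zero]
  rfl

theorem proj_one_eq_levelInf (hF : IsSpectralResolution u 2 F) {h : ℤ} {s : Fin 2 → ℝ}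
    (hs : s ∈ TSet u F h) : proj u F h s 1 = levelInf (Function.swap (level F)) (s 1) (s 0) := by
  rw [proj, levelInf, Function.swap, level_eq_of_mem_TSet hs]
  congr 1
  ext r
  show _ ∈ TSet u F h ↔ level F (s 0) r = h
  rw [mem_TSet_iff hF, Fin.update_two_one]
  rfl

end SpectralResolution

theorem stmt_13_general {G : Type*}
    [AddCommGroup G] [Lattice G] [CovariantClass G G (· + ·) (· ≤ ·)]
    (k : ℕ)
    (F : (Fin 2 → ℝ) → ℤ ×ₗ G) (hF : IsSpectralResolution (k : ℤ) 2 F)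
    (s0 t0 : ℝ) (hchar : ![s0, t0] ∈ charPoints (k : ℤ) F) :
    (∀ t s1 s2 : ℝ, ∀ m j : ℤ, t0 < t → s1 ≤ s0 → s0 < s2 →
      F ![s1, t] ∈ MLevel (k : ℤ) m → F ![s2, t] ∈ MLevel (k : ℤ) j → m < j) ∧
    (∀ s t1 t2 : ℝ, ∀ m j : ℤ, s0 < s → t1 ≤ t0 → t0 < t2 →
      F ![s, t1] ∈ MLevel (k : ℤ) m → F ![s, t2] ∈ MLevel (k : ℤ) j → m < j) := by
  have : IsOrderedAddMonoid G := { add_le_add_left := fun _ _ h c => add_le_add_left h c }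
  have hφ := isIntDistribFun_level hF
  obtain ⟨h, hpos, -, p, hp, hchar⟩ := hchar
  have hs0 : levelInf (level F) (p 0) (p 1) = s0 :=
    (proj_zero_eq_levelInf hF hp).symm.trans (congrFun hchar 0)
  have ht0 : levelInf (Function.swap (level F)) (p 1) (p 0) = t0 :=
    (proj_one_eq_levelInf hF hp).symm.trans (congrFun hchar 1)
  have hpos : 0 < level F (p 0) (p 1) := level_eq_of_mem_TSet hp ▸ hpos
  refine ⟨fun t s1 s2 m j ht hs1 hs2 hm hj => ?_, fun s t1 t2 m j hs ht1 ht2 hm hj => ?_⟩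
  · rw [← hm.2, ← hj.2]
    exact hφ.apply_lt_apply_of_levelInf hpos (ht0 ▸ ht) (hs0 ▸ hs1) (hs0 ▸ hs2)
  · rw [← hm.2, ← hj.2]
    exact hφ.swap.apply_lt_apply_of_levelInf hpos (hs0 ▸ hs) (ht0 ▸ ht1) (ht0 ▸ ht2)

theorem stmt_13 {G : Type*}
    [AddCommGroup G] [Lattice G] [CovariantClass G G (· + ·) (· ≤ ·)]
    (hG : DedekindSigmaComplete G) (k : ℕ) (hk : 1 ≤ k)
    (F : (Fin 2 → ℝ) → ℤ ×ₗ G) (hF : IsSpectralResolution (k : ℤ) 2 F)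
    (s0 t0 : ℝ) (hchar : ![s0, t0] ∈ charPoints (k : ℤ) F) :
    (∀ t s1 s2 : ℝ, ∀ m j : ℤ, t0 < t → s1 ≤ s0 → s0 < s2 →
      F ![s1, t] ∈ MLevel (k : ℤ) m → F ![s2, t] ∈ MLevel (k : ℤ) j → m < j) ∧
    (∀ s t1 t2 : ℝ, ∀ m j : ℤ, s0 < s → t1 ≤ t0 → t0 < t2 →
      F ![s, t1] ∈ MLevel (k : ℤ) m → F ![s, t2] ∈ MLevel (k : ℤ) j → m < j) :=
  stmt_13_general k F hF s0 t0 hchar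
end
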